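/- arXiv:2605.15043 — 7 statements merged into one kernel-verified Lean document; each statement's English description precedes it below -/
import Mathlib

section
/- Every finite graph with m edges and maximum degree at most Δ (with Δ ≥ 1) contains a linear forest (a subgraph that is a disjoint union of paths) with at least m/Δ edges. -/
open SimpleGraph Finset

lemma ncard_neighborSet_eq_degree {V : Type*} [Fintype V] (H : SimpleGraph V)
    [DecidableRel H.Adj] (x : V) : (H.neighborSet x).ncard = H.degree x := by
  rw [← SimpleGraph.card_neighborSet_eq_degree, Set.ncard_eq_toFinset_card',
    Set.toFinset_card]

lemma unique_far {V : Type*} [Fintype V] {H : SimpleGraph V}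
    (hac : H.IsAcyclic) (hdeg : ∀ x, (H.neighborSet x).ncard ≤ 2)
    {u v w : V}
    (hv : H.Reachable u v) (hw : H.Reachable u w)
    (hu1 : (H.neighborSet u).ncard ≤ 1)
    (hv1 : (H.neighborSet v).ncard ≤ 1)
    (hw1 : (H.neighborSet w).ncard ≤ 1)
    (hvu : v ≠ u) (hwu : w ≠ u) (hne : v ≠ w) : False := by
  classical
  set K : Set V := {x | H.Reachable u x} with hK
  have hcl : ∀ {x y}, x ∈ K → H.Adj x y → y ∈ K := fun hx hxy => hx.trans hxy.reachable
  have huK : u ∈ K := Set.mem_setOf.mpr (Reachable.refl u)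
  -- the induced graph on K
  set HK : SimpleGraph K := H.induce K with hHK
  have hconn : HK.Connected := by
    apply SimpleGraph.induce_connected_of_patches u huK
    intro x hx
    obtain ⟨p⟩ := (Set.mem_setOf.mp hx : H.Reachable u x)
    refine ⟨{y | y ∈ p.support}, ?_, p.start_mem_support, p.end_mem_support, ?_⟩
    · intro y hy
      exact Set.mem_setOf.mpr ⟨p.takeUntil y hy⟩
    · exact (p.connected_induce_support).preconnected _ _
  have hacK : HK.IsAcyclic := by
    intro a c hc
    exact hac _ ((SimpleGraph.Walk.map_isCycle_iff_of_injective
      (f := (SimpleGraph.Embedding.induce (G := H) (K : Set V)).toHom)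
      (SimpleGraph.Embedding.induce (G := H) (K : Set V)).injective).mpr hc)
  have htree : HK.IsTree := ⟨hconn, hacK⟩
  have hcard : HK.edgeFinset.card + 1 = Fintype.card K := htree.card_edgeFinset
  -- degrees in HK agree with degrees in H
  have hdegK : ∀ x : K, HK.degree x = H.degree x.1 := by
    intro x
    rw [← SimpleGraph.card_neighborSet_eq_degree, ← SimpleGraph.card_neighborSet_eq_degree]
    apply Fintype.card_of_bijective (f := fun y => (⟨y.1.1, y.2⟩ : H.neighborSet x.1))
    constructor
    · rintro ⟨⟨a, ha⟩, ha'⟩ ⟨⟨b, hb⟩, hb'⟩ h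
      simpa using congrArg Subtype.val h
    · rintro ⟨b, hb⟩
      exact ⟨⟨⟨b, hcl x.2 hb⟩, hb⟩, rfl⟩
  have hhs : ∑ x : K, HK.degree x = 2 * HK.edgeFinset.card :=
    SimpleGraph.sum_degrees_eq_twice_card_edges HK
  -- compute ∑ (2 - deg) = 2
  have hdeg2 : ∀ x : K, HK.degree x ≤ 2 := by
    intro x; rw [hdegK, ← ncard_neighborSet_eq_degree]; exact hdeg x.1
  have hsum2 : ∑ x : K, (2 - HK.degree x) = 2 := by
    rw [Finset.sum_tsub_distrib Finset.univ (fun i _ => hdeg2 i), Finset.sum_const,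
      Finset.card_univ, smul_eq_mul, hhs]
    omega
  -- but the three special vertices each contribute at least 1
  have hmem : ∀ x : V, H.Reachable u x → x ∈ K := fun x h => Set.mem_setOf.mpr h
  have htriple : ({⟨u, huK⟩, ⟨v, hmem v hv⟩, ⟨w, hmem w hw⟩} : Finset K).card = 3 := by
    rw [Finset.card_insert_of_notMem, Finset.card_insert_of_notMem, Finset.card_singleton]
    · simp [Subtype.ext_iff, hne]
    · simp [Subtype.ext_iff, hvu.symm, hwu.symm]
  have hone : ∀ x ∈ ({⟨u, huK⟩, ⟨v, hmem v hv⟩, ⟨w, hmem w hw⟩} : Finset K),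
      1 ≤ 2 - HK.degree x := by
    intro x hx
    have : H.degree x.1 ≤ 1 := by
      rw [← ncard_neighborSet_eq_degree]
      simp only [Finset.mem_insert, Finset.mem_singleton] at hx
      rcases hx with h | h | h <;> subst h <;> assumption
    have := hdegK x
    omega
  have h3 : 3 ≤ ∑ x : K, (2 - HK.degree x) := by
    calc (3 : ℕ) = ({⟨u, huK⟩, ⟨v, hmem v hv⟩, ⟨w, hmem w hw⟩} : Finset K).card • 1 := by
          simp [htriple]
      _ ≤ ∑ x ∈ ({⟨u, huK⟩, ⟨v, hmem v hv⟩, ⟨w, hmem w hw⟩} : Finset K), (2 - HK.degree x) :=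
          Finset.card_nsmul_le_sum _ _ _ hone
      _ ≤ ∑ x : K, (2 - HK.degree x) :=
          Finset.sum_le_sum_of_subset (Finset.subset_univ _)
  omega


lemma extend_lf {V : Type*} [Fintype V] {G H : SimpleGraph V} (hHG : H ≤ G)
    (hac : H.IsAcyclic) (hdeg : ∀ x, (H.neighborSet x).ncard ≤ 2) {u v : V}
    (huv : G.Adj u v) (hnadj : ¬ H.Adj u v)
    (hu : (H.neighborSet u).ncard ≤ 1) (hv : (H.neighborSet v).ncard ≤ 1)
    (hreach : ¬ H.Reachable u v) :
    ∃ H' : SimpleGraph V, H' ≤ G ∧ (∀ x, (H'.neighborSet x).ncard ≤ 2) ∧ H'.IsAcyclic ∧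
      H'.edgeSet.ncard = H.edgeSet.ncard + 1 := by
  classical
  have hne : u ≠ v := huv.ne
  set H' : SimpleGraph V := H ⊔ SimpleGraph.fromEdgeSet {s(u, v)} with hH'
  have hadj' : ∀ x y, H'.Adj x y ↔ H.Adj x y ∨ (x = u ∧ y = v) ∨ (x = v ∧ y = u) := by
    intro x y
    simp only [hH', SimpleGraph.sup_adj, SimpleGraph.fromEdgeSet_adj, Set.mem_singleton_iff,
      Sym2.eq_iff]
    constructor
    · rintro (h | ⟨(⟨rfl, rfl⟩ | ⟨rfl, rfl⟩), hne'⟩)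
      · exact Or.inl h
      · exact Or.inr (Or.inl ⟨rfl, rfl⟩)
      · exact Or.inr (Or.inr ⟨rfl, rfl⟩)
    · rintro (h | ⟨rfl, rfl⟩ | ⟨rfl, rfl⟩)
      · exact Or.inl h
      · exact Or.inr ⟨Or.inl ⟨rfl, rfl⟩, hne⟩
      · exact Or.inr ⟨Or.inr ⟨rfl, rfl⟩, hne.symm⟩
  refine ⟨H', ?_, ?_, ?_, ?_⟩
  · intro x y hxy
    rcases (hadj' x y).mp hxy with h | ⟨rfl, rfl⟩ | ⟨rfl, rfl⟩
    · exact hHG h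
    · exact huv
    · exact huv.symm
  · intro x
    by_cases hxu : x = u
    · subst hxu
      have hsub : H'.neighborSet x ⊆ insert v (H.neighborSet x) := by
        intro y hy
        rcases (hadj' x y).mp hy with h | ⟨-, rfl⟩ | ⟨rfl, rfl⟩
        · exact Set.mem_insert_of_mem _ h
        · exact Set.mem_insert _ _
        · exact absurd rfl hne
      calc (H'.neighborSet x).ncard ≤ (insert v (H.neighborSet x)).ncard :=
            Set.ncard_le_ncard hsub (Set.toFinite _)
        _ ≤ (H.neighborSet x).ncard + 1 := Set.ncard_insert_le _ _
        _ ≤ 2 := by omega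
    · by_cases hxv : x = v
      · subst hxv
        have hsub : H'.neighborSet x ⊆ insert u (H.neighborSet x) := by
          intro y hy
          rcases (hadj' x y).mp hy with h | ⟨rfl, rfl⟩ | ⟨-, rfl⟩
          · exact Set.mem_insert_of_mem _ h
          · exact absurd rfl hxu
          · exact Set.mem_insert _ _
        calc (H'.neighborSet x).ncard ≤ (insert u (H.neighborSet x)).ncard :=
              Set.ncard_le_ncard hsub (Set.toFinite _)
          _ ≤ (H.neighborSet x).ncard + 1 := Set.ncard_insert_le _ _
          _ ≤ 2 := by omega
      · have heq : H'.neighborSet x = H.neighborSet x := by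
          ext y
          simp only [SimpleGraph.mem_neighborSet, hadj' x y]
          constructor
          · rintro (h | ⟨rfl, rfl⟩ | ⟨rfl, rfl⟩)
            · exact h
            · exact absurd rfl hxu
            · exact absurd rfl hxv
          · exact Or.inl
        rw [heq]; exact hdeg x
  · intro a c hc
    by_cases he : s(u, v) ∈ c.edges
    · have hreach' : (H' \ SimpleGraph.fromEdgeSet {s(u, v)}).Reachable u v :=
        (SimpleGraph.adj_and_reachable_delete_edges_iff_exists_cycle.mpr ⟨a, c, hc, he⟩).2
      have hle : H' \ SimpleGraph.fromEdgeSet {s(u, v)} ≤ H := by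
        intro x y hxy
        rw [SimpleGraph.sdiff_adj] at hxy
        rcases (hadj' x y).mp hxy.1 with h | ⟨rfl, rfl⟩ | ⟨rfl, rfl⟩
        · exact h
        · exact absurd (by simp [SimpleGraph.fromEdgeSet_adj, hne]) hxy.2
        · exact absurd (by simp [SimpleGraph.fromEdgeSet_adj, hne.symm, Sym2.eq_swap]) hxy.2
      exact hreach (hreach'.mono hle)
    · have hp : ∀ e ∈ c.edges, e ∈ H.edgeSet := by
        intro e hece
        have : e ∈ H'.edgeSet := c.edges_subset_edgeSet hece
        rw [hH', SimpleGraph.edgeSet_sup, SimpleGraph.edgeSet_fromEdgeSet] at this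
        rcases this with h | h
        · exact h
        · exfalso
          have : e = s(u, v) := h.1
          exact he (this ▸ hece)
      exact hac _ (hc.transfer hp)
  · have hE : H'.edgeSet = insert s(u, v) H.edgeSet := by
      ext e
      simp only [hH', SimpleGraph.edgeSet_sup, SimpleGraph.edgeSet_fromEdgeSet, Set.mem_union,
        Set.mem_diff, Set.mem_singleton_iff, Set.mem_insert_iff, Set.mem_setOf_eq]
      constructor
      · rintro (h | ⟨rfl, -⟩)
        exacts [Or.inr h, Or.inl rfl]
      · rintro (rfl | h)
        · exact Or.inr ⟨rfl, by simp [Sym2.mk_isDiag_iff, hne]⟩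
        · exact Or.inl h
    rw [hE, Set.ncard_insert_of_notMem (fun hmem => hnadj ((SimpleGraph.mem_edgeSet H).mp hmem))
      (Set.toFinite _)]

/-- Every finite graph with `m` edges and maximum degree at most `Δ ≥ 1`
contains a linear forest (a subgraph with all degrees at most 2 and no cycles, i.e. a
disjoint union of paths) with at least `m / Δ` edges. -/
theorem statement0 {V : Type*} [Fintype V] (G : SimpleGraph V) (m Δ : ℕ)
    (hm : G.edgeSet.ncard = m) (hΔ1 : 1 ≤ Δ)
    (hΔ : ∀ v : V, (G.neighborSet v).ncard ≤ Δ) :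
    ∃ H : SimpleGraph V, H ≤ G ∧ (∀ v : V, (H.neighborSet v).ncard ≤ 2) ∧ H.IsAcyclic ∧
      (m : ℝ) / (Δ : ℝ) ≤ (H.edgeSet.ncard : ℝ) := by
  classical
  -- the property of being a linear forest inside G
  set P : SimpleGraph V → Prop :=
    fun H => H ≤ G ∧ (∀ v, (H.neighborSet v).ncard ≤ 2) ∧ H.IsAcyclic with hP
  have hPbot : P ⊥ := by
    refine ⟨bot_le, fun v => ?_, ?_⟩
    · have hns : (⊥ : SimpleGraph V).neighborSet v = ∅ := by ext w; simp
      rw [hns]; simp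
    · intro a c hc
      cases c with
      | nil => exact hc.ne_nil rfl
      | cons h q => simp at h
  set N : Set ℕ := {n | ∃ H, P H ∧ H.edgeSet.ncard = n} with hN
  have hN0 : 0 ∈ N := ⟨⊥, hPbot, by simp⟩
  have hbddN : ∀ n ∈ N, n ≤ m := by
    rintro n ⟨H, ⟨hHG, -, -⟩, rfl⟩
    rw [← hm]
    exact Set.ncard_le_ncard (SimpleGraph.edgeSet_mono hHG) (Set.toFinite _)
  obtain ⟨H, ⟨hHG, hdeg, hac⟩, hcard⟩ :
      ∃ H, P H ∧ H.edgeSet.ncard = sSup N :=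
    Nat.sSup_mem ⟨0, hN0⟩ ⟨m, fun n hn => hbddN n hn⟩
  have hmax : ∀ H' : SimpleGraph V, P H' → H'.edgeSet.ncard ≤ H.edgeSet.ncard := by
    intro H' h
    rw [hcard]
    exact le_csSup ⟨m, fun n hn => hbddN n hn⟩ ⟨H', h, rfl⟩
  refine ⟨H, hHG, hdeg, hac, ?_⟩
  -- it suffices to prove the natural-number inequality
  rw [div_le_iff₀ (by exact_mod_cast hΔ1)]
  rw [show ((H.edgeSet.ncard : ℝ) * Δ) = ((H.edgeSet.ncard * Δ : ℕ) : ℝ) by push_cast; ring]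
  rw [Nat.cast_le]
  -- key consequence of maximality
  have hkey : ∀ x y, G.Adj x y → ¬H.Adj x y →
      (H.neighborSet x).ncard = 2 ∨ (H.neighborSet y).ncard = 2 ∨ H.Reachable x y := by
    intro x y hxy hnxy
    by_cases h2x : (H.neighborSet x).ncard = 2
    · exact Or.inl h2x
    by_cases h2y : (H.neighborSet y).ncard = 2
    · exact Or.inr (Or.inl h2y)
    by_contra hcon
    push_neg at hcon
    obtain ⟨H', hH'G, hH'deg, hH'ac, hH'card⟩ :=
      extend_lf hHG hac hdeg hxy hnxy (by have := hdeg x; omega) (by have := hdeg y; omega)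
        hcon.2.2
    have := hmax H' ⟨hH'G, hH'deg, hH'ac⟩
    omega
  -- move to finsets
  have hconv : ∀ (F : SimpleGraph V), F.edgeSet.ncard = #F.edgeFinset := by
    intro F
    rw [← Nat.card_coe_set_eq, Nat.card_eq_fintype_card, SimpleGraph.edgeFinset_card]
  set E := #H.edgeFinset with hE
  rw [hconv]
  set R : Finset (Sym2 V) := G.edgeFinset \ H.edgeFinset with hR
  have hEHsub : H.edgeFinset ⊆ G.edgeFinset := by
    intro e he
    rw [SimpleGraph.mem_edgeFinset] at he ⊢
    exact SimpleGraph.edgeSet_mono hHG he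
  have hsplitm : m = E + #R := by
    rw [hR, Finset.card_sdiff_of_subset hEHsub, ← hconv, hm, hE, ← hconv]
    have : #H.edgeFinset ≤ #G.edgeFinset := Finset.card_le_card hEHsub
    rw [← hconv, ← hconv] at this
    omega
  set A : Finset (Sym2 V) :=
    R.filter (fun e => ∃ x ∈ e, (H.neighborSet x).ncard = 2) with hA
  set C : Finset (Sym2 V) :=
    R.filter (fun e => ¬ ∃ x ∈ e, (H.neighborSet x).ncard = 2) with hC
  have hsplitR : #R = #A + #C := (Finset.card_filter_add_card_filter_not _).symm
  set S2 : Finset V := univ.filter (fun v => (H.neighborSet v).ncard = 2) with hS2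
  set S1 : Finset V := univ.filter (fun v => (H.neighborSet v).ncard = 1) with hS1
  -- facts about R-edges
  have hRfact : ∀ x y, s(x, y) ∈ R → G.Adj x y ∧ ¬H.Adj x y := by
    intro x y hxy
    rw [hR, Finset.mem_sdiff, SimpleGraph.mem_edgeFinset, SimpleGraph.mem_edgeFinset,
      SimpleGraph.mem_edgeSet, SimpleGraph.mem_edgeSet] at hxy
    exact hxy
  -- bounding A
  have hAbound : #A ≤ #S2 * (Δ - 2) := by
    have hsub : A ⊆ S2.biUnion (fun v => A.filter (fun e => v ∈ e)) := by
      intro e he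
      have he' := he
      rw [hA, Finset.mem_filter] at he'
      obtain ⟨x, hxe, hx2⟩ := he'.2
      rw [Finset.mem_biUnion]
      exact ⟨x, by simp [hS2, hx2], by simp [he, hxe]⟩
    calc #A ≤ #(S2.biUnion (fun v => A.filter (fun e => v ∈ e))) := Finset.card_le_card hsub
      _ ≤ ∑ v ∈ S2, #(A.filter (fun e => v ∈ e)) := Finset.card_biUnion_le
      _ ≤ ∑ v ∈ S2, (Δ - 2) := by
          apply Finset.sum_le_sum
          intro v hv
          have hsub2 : A.filter (fun e => v ∈ e) ⊆
              G.incidenceFinset v \ H.incidenceFinset v := by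
            intro e he
            rw [Finset.mem_filter] at he
            have heR : e ∈ R := Finset.mem_of_mem_filter e (hA ▸ he.1)
            rw [hR, Finset.mem_sdiff, SimpleGraph.mem_edgeFinset,
              SimpleGraph.mem_edgeFinset] at heR
            rw [Finset.mem_sdiff, SimpleGraph.mem_incidenceFinset,
              SimpleGraph.mem_incidenceFinset]
            exact ⟨⟨heR.1, he.2⟩, fun hc => heR.2 hc.1⟩
          have hsub3 : H.incidenceFinset v ⊆ G.incidenceFinset v := by
            intro e he
            rw [SimpleGraph.mem_incidenceFinset] at he ⊢
            exact ⟨SimpleGraph.edgeSet_mono hHG he.1, he.2⟩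
          calc #(A.filter (fun e => v ∈ e)) ≤ #(G.incidenceFinset v \ H.incidenceFinset v) :=
                Finset.card_le_card hsub2
            _ = G.degree v - H.degree v := by
                rw [Finset.card_sdiff_of_subset hsub3, SimpleGraph.card_incidenceFinset_eq_degree,
                  SimpleGraph.card_incidenceFinset_eq_degree]
            _ ≤ Δ - 2 := by
                have h1 : G.degree v ≤ Δ := by
                  rw [← ncard_neighborSet_eq_degree]; exact hΔ v
                have h2 : H.degree v = 2 := by
                  rw [← ncard_neighborSet_eq_degree]
                  rw [hS2, Finset.mem_filter] at hv
                  exact hv.2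
                omega
      _ = #S2 * (Δ - 2) := by rw [Finset.sum_const, smul_eq_mul]
  -- facts about C-edges
  have hCfact : ∀ x y, s(x, y) ∈ C →
      (H.neighborSet x).ncard = 1 ∧ H.Reachable x y ∧ x ≠ y := by
    intro x y hxy
    rw [hC, Finset.mem_filter] at hxy
    obtain ⟨hR', hno2⟩ := hxy
    obtain ⟨hGxy, hnHxy⟩ := hRfact x y hR'
    have hx2 : (H.neighborSet x).ncard ≠ 2 := fun h => hno2 ⟨x, by simp, h⟩
    have hy2 : (H.neighborSet y).ncard ≠ 2 := fun h => hno2 ⟨y, by simp, h⟩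
    have hreach : H.Reachable x y := by
      rcases hkey x y hGxy hnHxy with h | h | h
      · exact absurd h hx2
      · exact absurd h hy2
      · exact h
    refine ⟨?_, hreach, hGxy.ne⟩
    have hpos : 0 < (H.neighborSet x).ncard := by
      obtain ⟨p⟩ := hreach
      cases p with
      | nil => exact absurd rfl hGxy.ne
      | cons h q => exact Set.ncard_pos (Set.toFinite _) |>.mpr ⟨_, h⟩
    have := hdeg x
    omega
  -- each vertex lies in at most one C-edge
  have hCuniq : ∀ e ∈ C, ∀ f ∈ C, ∀ x : V, x ∈ e → x ∈ f → e = f := by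
    intro e he f hf x hxe hxf
    obtain ⟨y, rfl⟩ := Sym2.mem_iff_exists.mp hxe
    obtain ⟨z, rfl⟩ := Sym2.mem_iff_exists.mp hxf
    obtain ⟨hdx, hrxy, hnxy⟩ := hCfact x y he
    obtain ⟨-, hrxz, hnxz⟩ := hCfact x z hf
    obtain ⟨hdy, -, -⟩ := hCfact y x (Sym2.eq_swap ▸ he)
    obtain ⟨hdz, -, -⟩ := hCfact z x (Sym2.eq_swap ▸ hf)
    by_cases hyz : y = z
    · rw [hyz]
    · exact absurd (unique_far hac hdeg hrxy hrxz (by omega) (by omega) (by omega)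
        hnxy.symm hnxz.symm hyz) not_false
  -- bounding C : 2 * #C ≤ #S1
  have hCbound : 2 * #C ≤ #S1 := by
    have hdisj : ∀ e ∈ C, ∀ f ∈ C, e ≠ f →
        Disjoint (univ.filter (· ∈ e)) (univ.filter (· ∈ f)) := by
      intro e he f hf hef
      rw [Finset.disjoint_left]
      intro x hxe hxf
      rw [Finset.mem_filter] at hxe hxf
      exact hef (hCuniq e he f hf x hxe.2 hxf.2)
    have hcardU : #(C.biUnion (fun e => univ.filter (· ∈ e))) = ∑ e ∈ C, 2 := by
      rw [Finset.card_biUnion hdisj]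
      apply Finset.sum_congr rfl
      intro e he
      induction e using Sym2.ind with
      | _ x y =>
        obtain ⟨-, -, hne⟩ := hCfact x y he
        have : univ.filter (· ∈ s(x, y)) = {x, y} := by
          ext z
          simp [Sym2.mem_iff]
        rw [this, Finset.card_pair hne]
    have hUsub : C.biUnion (fun e => univ.filter (· ∈ e)) ⊆ S1 := by
      intro x hx
      rw [Finset.mem_biUnion] at hx
      obtain ⟨e, he, hxe⟩ := hx
      rw [Finset.mem_filter] at hxe
      obtain ⟨y, rfl⟩ := Sym2.mem_iff_exists.mp hxe.2
      obtain ⟨hdx, -, -⟩ := hCfact x y he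
      rw [hS1, Finset.mem_filter]
      exact ⟨Finset.mem_univ x, hdx⟩
    have := Finset.card_le_card hUsub
    rw [hcardU, Finset.sum_const, smul_eq_mul] at this
    omega
  -- handshake
  have hhs : ∑ v, H.degree v = 2 * E := SimpleGraph.sum_degrees_eq_twice_card_edges H
  have hS12 : 2 * #S2 + #S1 ≤ 2 * E := by
    have hdisj : Disjoint S2 S1 := by
      rw [Finset.disjoint_left]
      intro v hv2 hv1
      rw [hS2, Finset.mem_filter] at hv2
      rw [hS1, Finset.mem_filter] at hv1
      omega
    have hsub : S2 ∪ S1 ⊆ univ := Finset.subset_univ _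
    have h1 : ∑ v ∈ S2 ∪ S1, H.degree v ≤ ∑ v, H.degree v :=
      Finset.sum_le_sum_of_subset hsub
    rw [Finset.sum_union hdisj] at h1
    have h2 : ∑ v ∈ S2, H.degree v = 2 * #S2 := by
      rw [Finset.sum_congr rfl (fun v hv => ?_), Finset.sum_const, smul_eq_mul, mul_comm]
      rw [hS2, Finset.mem_filter] at hv
      rw [← ncard_neighborSet_eq_degree]
      exact hv.2
    have h3 : ∑ v ∈ S1, H.degree v = #S1 := by
      rw [Finset.sum_congr rfl (fun v hv => ?_), Finset.sum_const, smul_eq_mul, mul_one]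
      rw [hS1, Finset.mem_filter] at hv
      rw [← ncard_neighborSet_eq_degree]
      exact hv.2
    rw [h2, h3] at h1
    omega
  -- final arithmetic
  rcases Nat.lt_or_ge Δ 2 with hΔ2 | hΔ2
  · -- Δ = 1 : A and C are empty
    have hΔeq : Δ = 1 := by omega
    have hdegG : ∀ v, (H.neighborSet v).ncard ≤ 1 := by
      intro v
      calc (H.neighborSet v).ncard ≤ (G.neighborSet v).ncard :=
            Set.ncard_le_ncard (fun y hy => hHG hy) (Set.toFinite _)
        _ ≤ Δ := hΔ v
        _ = 1 := hΔeq
    have hAempty : #A = 0 := by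
      rw [Finset.card_eq_zero, hA, Finset.filter_eq_empty_iff]
      rintro e - ⟨x, -, hx⟩
      have := hdegG x
      omega
    have hCempty : #C = 0 := by
      rw [Finset.card_eq_zero, hC, Finset.filter_eq_empty_iff]
      intro e he
      induction e using Sym2.ind with
      | _ x y =>
        intro hno2
        have heC : s(x, y) ∈ C := by rw [hC, Finset.mem_filter]; exact ⟨he, hno2⟩
        obtain ⟨hdx, hrxy, hnexy⟩ := hCfact x y heC
        obtain ⟨n, hn⟩ := Set.ncard_pos (Set.toFinite _) |>.mp (by omega :
          0 < (H.neighborSet x).ncard)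
        obtain ⟨hGxy, hnHxy⟩ := hRfact x y (Finset.mem_of_mem_filter _ (hC ▸ heC))
        have hny : n ≠ y := fun h => hnHxy (h ▸ hn)
        have hsub : ({n, y} : Set V) ⊆ G.neighborSet x := by
          rintro z (rfl | rfl)
          · exact hHG hn
          · exact hGxy
        have := Set.ncard_le_ncard hsub (Set.toFinite _)
        rw [Set.ncard_pair hny] at this
        have := hΔ x
        omega
    rw [hΔeq, mul_one]
    omega
  · -- Δ ≥ 2
    obtain ⟨d, rfl⟩ : ∃ d, Δ = d + 2 := ⟨Δ - 2, by omega⟩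
    rw [show d + 2 - 2 = d from by omega] at hAbound
    have hS2E : #S2 ≤ E := by omega
    have hAE : #A ≤ E * d :=
      hAbound.trans (Nat.mul_le_mul_right d hS2E)
    have hCE : #C ≤ E := by omega
    calc m = E + #A + #C := by omega
      _ ≤ E + E * d + E := by omega
      _ = E * (d + 2) := by ring
end

section
/- Let G be an n-vertex d-regular graph which is a γ-expander, i.e. for every S ⊆ V(G) with 1 ≤ |S| ≤ (2/3)n one has e_G(S, V(G)∖S) ≥ γ·d·|S|. Then G stays connected after simultaneously removing any edge set E′ ⊆ E(G) with maximum degree at most γd/4 and any vertex set U ⊆ V(G) with |U| ≤ γd/4. -/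
/-!
Let `S` be the vertex set of a component of `(G - E')[Uᶜ]`. Every edge of `G` leaving `S` ends
in `U` or lies in `E'`, so if `|S| ≤ 2n/3`, expansion gives
`γd|S| ≤ e(S, Sᶜ) ≤ d|U| + |S|γd/4`, whence `|S| ≤ d/3`. But a vertex of `S` keeps at
least `d - |U| - γd/4 ≥ d/2` of its neighbours inside `S` (expansion of a single vertex
gives `γ ≤ 1`), so `|S| > d/2`. Hence every component has more than `2n/3` vertices, and
there is only one.
-/

noncomputable section

/-- The number of edges of `G` crossing the cut `(S, Sᶜ)`, counted as the number of
ordered adjacent pairs `(u, v)` with `u ∈ S`, `v ∉ S` (each cut edge is counted once). -/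
def cutCount {V : Type*} (G : SimpleGraph V) (S : Set V) : ℕ :=
  {p : V × V | G.Adj p.1 p.2 ∧ p.1 ∈ S ∧ p.2 ∉ S}.ncard

theorem Set.ncard_pairs_le_mul {α β : Type*} [Finite α] [Finite β] (s : Set α)
    (R : α → β → Prop) (k : ℝ) (hR : ∀ a ∈ s, ({b | R a b}.ncard : ℝ) ≤ k) :
    ({p : α × β | p.1 ∈ s ∧ R p.1 p.2}.ncard : ℝ) ≤ s.ncard * k := by
  classical
  have := Fintype.ofFinite α
  have := Fintype.ofFinite β
  set P := {p : α × β | p.1 ∈ s ∧ R p.1 p.2}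
  have hfiber : ∀ a ∈ s.toFinset, ((P.toFinset.filter (·.1 = a)).card : ℝ) ≤ k := by
    intro a ha
    refine le_trans ?_ (hR a (by simpa using ha))
    rw [ncard_eq_toFinset_card']
    refine Nat.cast_le.mpr (Finset.card_le_card_of_injOn Prod.snd ?_
      (fun p hp q hq h => Prod.ext (by simp_all) h))
    intro p hp
    simp only [Finset.coe_filter, mem_toFinset, mem_ofPred_eq, P] at hp
    simpa [hp.2] using hp.1.2
  rw [ncard_eq_toFinset_card' P, ncard_eq_toFinset_card' s,
    Finset.card_eq_sum_card_fiberwise (f := Prod.fst) (t := s.toFinset)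
      (fun p hp => by simpa using (mem_toFinset.mp hp).1)]
  push_cast
  simpa [mul_comm] using Finset.sum_le_card_nsmul _ _ _ hfiber

theorem Sym2.ncard_setOf_mk_mem_le {V : Type*} [Finite V] (E : Set (Sym2 V)) (u : V) :
    {v | s(u, v) ∈ E}.ncard ≤ {e ∈ E | u ∈ e}.ncard :=
  Set.ncard_le_ncard_of_injOn (fun v => s(u, v)) (fun v hv => ⟨hv, Sym2.mem_mk_left u v⟩)
    (fun _ _ _ _ h => Sym2.congr_right.mp h)

namespace SimpleGraph

open Set

variable {V : Type*} (G : SimpleGraph V)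

theorem ncard_neighborSet_lt_card [Finite V] (v : V) : (G.neighborSet v).ncard < Nat.card V :=
  (ncard_lt_ncard (ssubset_univ_iff.mpr fun h =>
    G.notMem_neighborSet_self (h ▸ mem_univ v))).trans_eq (ncard_univ V)

theorem lt_card_of_ncard_neighborSet_eq [Fintype V] [Nonempty V] {d : ℕ}
    (hreg : ∀ v, (G.neighborSet v).ncard = d) : d < Fintype.card V := by
  simpa [hreg, Nat.card_eq_fintype_card] using G.ncard_neighborSet_lt_card (Classical.arbitrary V)

def IsCutOffBy (U : Set V) (E' : Set (Sym2 V)) (S : Set V) : Prop :=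
  ∀ u ∈ S, ∀ v, G.Adj u v → v ∉ S → v ∈ U ∨ s(u, v) ∈ E'

theorem isCutOffBy_image_reachable (U : Set V) (E' : Set (Sym2 V)) (x : ↥Uᶜ) :
    G.IsCutOffBy U E'
      (Subtype.val '' {z | ((G.deleteEdges E').induce Uᶜ).Reachable x z}) := by
  rintro _ ⟨z, hz, rfl⟩ v hzv hv
  by_contra! h
  exact hv ⟨⟨v, h.1⟩, hz.trans (Adj.reachable (by simpa using ⟨hzv, h.2⟩)), rfl⟩

variable {G} [Finite V] {U : Set V} {E' : Set (Sym2 V)} {S : Set V}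

theorem IsCutOffBy.cutCount_le (hS : G.IsCutOffBy U E' S) {d : ℕ}
    (hdeg : ∀ v, (G.neighborSet v).ncard ≤ d) {k : ℝ}
    (hE' : ∀ v, ({e ∈ E' | v ∈ e}.ncard : ℝ) ≤ k) :
    (cutCount G S : ℝ) ≤ U.ncard * d + S.ncard * k := by
  set toU := Prod.swap '' {p : V × V | p.1 ∈ U ∧ G.Adj p.1 p.2}
  set alongE' := {p : V × V | p.1 ∈ S ∧ s(p.1, p.2) ∈ E'}
  have hsub : {p : V × V | G.Adj p.1 p.2 ∧ p.1 ∈ S ∧ p.2 ∉ S} ⊆ toU ∪ alongE' := by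
    rintro ⟨u, v⟩ ⟨huv, hu, hv⟩
    rcases hS u hu v huv hv with hvU | huvE'
    · exact Or.inl ⟨(v, u), ⟨hvU, huv.symm⟩, rfl⟩
    · exact Or.inr ⟨hu, huvE'⟩
  have htoU : (toU.ncard : ℝ) ≤ U.ncard * d := by
    rw [ncard_image_of_injective _ Prod.swap_injective]
    exact ncard_pairs_le_mul U G.Adj d fun v _ => Nat.cast_le.mpr (hdeg v)
  have halongE' : (alongE'.ncard : ℝ) ≤ S.ncard * k :=
    ncard_pairs_le_mul S (fun u v => s(u, v) ∈ E') k fun u _ =>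
      (Nat.cast_le.mpr (Sym2.ncard_setOf_mk_mem_le E' u)).trans (hE' u)
  rw [cutCount]
  calc (_ : ℝ) ≤ (toU ∪ alongE').ncard := Nat.cast_le.mpr (ncard_le_ncard hsub)
    _ ≤ toU.ncard + alongE'.ncard := by exact_mod_cast ncard_union_le _ _
    _ ≤ U.ncard * d + S.ncard * k := add_le_add htoU halongE'

theorem IsCutOffBy.ncard_neighborSet_lt (hS : G.IsCutOffBy U E' S) {u : V} (hu : u ∈ S) :
    (G.neighborSet u).ncard < S.ncard + U.ncard + {e ∈ E' | u ∈ e}.ncard := by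
  have hsub : insert u (G.neighborSet u) ⊆ S ∪ U ∪ {v | s(u, v) ∈ E'} := by
    rintro v (rfl | huv)
    · exact Or.inl (Or.inl hu)
    · by_cases hv : v ∈ S
      · exact Or.inl (Or.inl hv)
      · rcases hS u hu v huv hv with hvU | huvE'
        exacts [Or.inl (Or.inr hvU), Or.inr huvE']
  calc (G.neighborSet u).ncard < (insert u (G.neighborSet u)).ncard := by
        rw [ncard_insert_of_notMem G.notMem_neighborSet_self]; omega
    _ ≤ (S ∪ U ∪ {v | s(u, v) ∈ E'}).ncard := ncard_le_ncard hsub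
    _ ≤ S.ncard + U.ncard + {v | s(u, v) ∈ E'}.ncard :=
        (ncard_union_le _ _).trans (Nat.add_le_add_right (ncard_union_le _ _) _)
    _ ≤ S.ncard + U.ncard + {e ∈ E' | u ∈ e}.ncard :=
        Nat.add_le_add_left (Sym2.ncard_setOf_mk_mem_le E' u) _

section Expander

variable [Fintype V] {d : ℕ} {γ : ℝ} (hd : 0 < d) (hreg : ∀ v, (G.neighborSet v).ncard = d)
  (hexp : ∀ S : Set V, 1 ≤ S.ncard → (S.ncard : ℝ) ≤ 2 / 3 * (Fintype.card V : ℝ) →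
    γ * d * S.ncard ≤ (cutCount G S : ℝ))
include hd hreg hexp

theorem expansion_le_one [Nonempty V] : γ ≤ 1 := by
  obtain ⟨v⟩ := ‹Nonempty V›
  have hn := G.lt_card_of_ncard_neighborSet_eq hreg
  have hcut : (cutCount G {v} : ℝ) ≤ ({v} : Set V).ncard * d := by
    have hsub : {p : V × V | G.Adj p.1 p.2 ∧ p.1 ∈ ({v} : Set V) ∧ p.2 ∉ ({v} : Set V)} ⊆
        {p | p.1 ∈ ({v} : Set V) ∧ G.Adj p.1 p.2} := fun p hp => ⟨hp.2.1, hp.1⟩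
    calc (cutCount G {v} : ℝ) ≤ {p : V × V | p.1 ∈ ({v} : Set V) ∧ G.Adj p.1 p.2}.ncard :=
          Nat.cast_le.mpr (ncard_le_ncard hsub)
      _ ≤ ({v} : Set V).ncard * d :=
          ncard_pairs_le_mul {v} G.Adj d fun u _ => Nat.cast_le.mpr (hreg u).le
  have hsingle := hexp {v} (by simp) (by
    rw [ncard_singleton, Nat.cast_one]
    have h2 : 2 ≤ Fintype.card V := by omega
    linarith [show (2 : ℝ) ≤ Fintype.card V by exact_mod_cast h2])
  simp only [ncard_singleton, Nat.cast_one] at hsingle hcut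
  have hdpos : (0 : ℝ) < d := by exact_mod_cast hd
  nlinarith

theorem IsCutOffBy.two_thirds_card_lt_ncard (hγ : 0 < γ) (hγ1 : γ ≤ 1)
    (hE'deg : ∀ v, ({e ∈ E' | v ∈ e}.ncard : ℝ) ≤ γ * d / 4)
    (hU : (U.ncard : ℝ) ≤ γ * d / 4)
    (hS : G.IsCutOffBy U E' S) (hne : S.Nonempty) :
    2 / 3 * (Fintype.card V : ℝ) < S.ncard := by
  by_contra! hsmall
  obtain ⟨u, hu⟩ := hne
  have hdpos : (0 : ℝ) < d := by exact_mod_cast hd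
  have hcut := (hexp S ((ncard_pos).mpr ⟨u, hu⟩) hsmall).trans
    (hS.cutCount_le (fun v => (hreg v).le) hE'deg)
  have hdeg : (d : ℝ) + 1 ≤ S.ncard + U.ncard + {e ∈ E' | u ∈ e}.ncard := by
    have := hS.ncard_neighborSet_lt hu
    rw [hreg] at this
    exact_mod_cast this
  have hsmallS : 3 * (S.ncard : ℝ) - d ≤ 0 := by
    refine nonpos_of_mul_nonpos_left (b := γ * d) ?_ (by positivity)
    nlinarith [mul_le_mul_of_nonneg_right hU hdpos.le]
  nlinarith [hE'deg u]

end Expander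

end SimpleGraph

theorem statement3_general {V : Type*} [Fintype V] [Nonempty V] (G : SimpleGraph V) (d : ℕ) (γ : ℝ)
    (hd : 1 ≤ d) (hγ : 0 < γ)
    (hreg : ∀ v : V, (G.neighborSet v).ncard = d)
    (hexp : ∀ S : Set V, 1 ≤ S.ncard → (S.ncard : ℝ) ≤ 2 / 3 * (Fintype.card V : ℝ) →
      γ * d * S.ncard ≤ (cutCount G S : ℝ))
    (E' : Set (Sym2 V))
    (hE'deg : ∀ v : V, ({e ∈ E' | v ∈ e}.ncard : ℝ) ≤ γ * d / 4)
    (U : Set V) (hU : (U.ncard : ℝ) ≤ γ * d / 4) :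
    ((G.deleteEdges E').induce Uᶜ).Connected := by
  have hγ1 := SimpleGraph.expansion_le_one hd hreg hexp
  have hUc : Uᶜ.Nonempty := by
    by_contra! h
    rw [Set.compl_empty_iff.mp h, Set.ncard_univ, Nat.card_eq_fintype_card] at hU
    have hn : (d : ℝ) + 1 ≤ Fintype.card V := by
      exact_mod_cast G.lt_card_of_ncard_neighborSet_eq hreg
    nlinarith [(Nat.cast_nonneg d : (0 : ℝ) ≤ d)]
  have := hUc.to_subtype
  refine (SimpleGraph.connected_iff _).mpr ⟨fun x y => ?_, this⟩
  by_contra hxy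
  let component (z : ↥Uᶜ) : Set V :=
    Subtype.val '' {w | ((G.deleteEdges E').induce Uᶜ).Reachable z w}
  have hlarge (z : ↥Uᶜ) : 2 / 3 * (Fintype.card V : ℝ) < (component z).ncard :=
    (SimpleGraph.isCutOffBy_image_reachable G U E' z).two_thirds_card_lt_ncard
      hd hreg hexp hγ hγ1 hE'deg hU ⟨z, z, .refl z, rfl⟩
  have hdisj : Disjoint (component x) (component y) := by
    rw [Set.disjoint_left]
    rintro _ ⟨z, hxz, rfl⟩ ⟨w, hyw, hwz⟩
    exact hxy (hxz.trans (Subtype.ext hwz ▸ hyw).symm)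
  have hsum : (component x).ncard + (component y).ncard ≤ Fintype.card V := by
    rw [← Set.ncard_union_eq hdisj, ← Nat.card_eq_fintype_card, ← Set.ncard_univ]
    exact Set.ncard_le_ncard (Set.subset_univ _)
  have hsum' : ((component x).ncard : ℝ) + (component y).ncard ≤ Fintype.card V := by
    exact_mod_cast hsum
  linarith [hlarge x, hlarge y]

/-- An `n`-vertex `d`-regular `γ`-expander stays connected after
simultaneously removing any edge set `E'` of maximum degree at most `γd/4` and any
vertex set `U` of size at most `γd/4` (i.e. it is `(γd/4)`-iron). -/
theorem statement3 {V : Type*} [Fintype V] [Nonempty V] (G : SimpleGraph V) (d : ℕ) (γ : ℝ)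
    (hd : 1 ≤ d) (hγ : 0 < γ)
    (hreg : ∀ v : V, (G.neighborSet v).ncard = d)
    (hexp : ∀ S : Set V, 1 ≤ S.ncard → (S.ncard : ℝ) ≤ 2 / 3 * (Fintype.card V : ℝ) →
      γ * d * S.ncard ≤ (cutCount G S : ℝ))
    (E' : Set (Sym2 V)) (hE'sub : E' ⊆ G.edgeSet)
    (hE'deg : ∀ v : V, ({e ∈ E' | v ∈ e}.ncard : ℝ) ≤ γ * d / 4)
    (U : Set V) (hU : (U.ncard : ℝ) ≤ γ * d / 4) :
    ((G.deleteEdges E').induce Uᶜ).Connected :=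
  statement3_general G d γ hd hγ hreg hexp E' hE'deg U hU
end
end

section
/- Let G be an n-vertex (γ, s)-expander (for every U ⊆ V(G) and F ⊆ E(G) with 1 ≤ |U| ≤ (2/3)n and |F| ≤ s|U|, we have |N_{G−F}(U)| ≥ γ|U|), let 0 < γ < 1, and s ≥ μ ≥ 1. Then for every U ⊆ V(G) with |U| ≤ (2/3)n, there exists U′ ⊆ U with |N_G(U′)| ≥ μ|U′| and |U′| ≥ γ|U|/(12μ). -/
/-!
Fix a maximiser `M ⊆ U` of the surplus `|N(W) ∖ U| - μ|W|` over `W ⊆ U`. Maximality means that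
every `u ∈ U ∖ M` has at most `μ` neighbours outside `U ∪ N(M)`, so deleting all such edges
removes at most `μ|U| ≤ s|U|` edges. After the deletion every external neighbour of `U` lies in
`N(M) ∖ U`, so expansion gives `|N(M) ∖ U| ≥ γ|U|`. Since the surplus of `M` is nonnegative,
`M` can be padded inside `U` to a set of size `min(|U|, ⌊|N(M) ∖ U| / μ⌋)`, which is at least
`γ|U| / (2μ)` and still has at least `μ` external neighbours per vertex.
-/

noncomputable section

/-- The external neighbourhood of `U` in `H`: vertices outside `U` with a neighbour in `U`. -/
def extNbhd {W : Type*} (H : SimpleGraph W) (U : Set W) : Set W :=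
  {v | v ∉ U ∧ ∃ u ∈ U, H.Adj u v}

section ExpanderNeighbourhoods

open SimpleGraph

variable {V : Type*} (G : SimpleGraph V)

def IsExpander [Fintype V] (γ s : ℝ) : Prop :=
  ∀ (U : Set V) (F : Set (Sym2 V)), F ⊆ G.edgeSet →
    1 ≤ U.ncard → (U.ncard : ℝ) ≤ 2 / 3 * (Fintype.card V : ℝ) →
    (F.ncard : ℝ) ≤ s * U.ncard →
    γ * U.ncard ≤ ((extNbhd (G.deleteEdges F) U).ncard : ℝ)

def surplus (U : Set V) (μ : ℝ) (W : Set V) : ℝ :=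
  (extNbhd G W \ U).ncard - μ * W.ncard

def escapingEdges (U M : Set V) : Set (Sym2 V) :=
  ⋃ a ∈ U \ M, (fun b => s(a, b)) '' (G.neighborSet a \ (U ∪ extNbhd G M))

@[simp]
lemma extNbhd_empty : extNbhd G ∅ = ∅ := by
  simp [extNbhd]

lemma extNbhd_diff_subset_extNbhd {U M P : Set V} (hMP : M ⊆ P) (hPU : P ⊆ U) :
    extNbhd G M \ U ⊆ extNbhd G P :=
  fun _ ⟨⟨_, u, hu, huv⟩, hvU⟩ => ⟨fun hvP => hvU (hPU hvP), u, hMP hu, huv⟩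

lemma escapingEdges_subset_edgeSet (U M : Set V) : escapingEdges G U M ⊆ G.edgeSet := by
  simp only [escapingEdges, Set.iUnion_subset_iff, Set.image_subset_iff]
  exact fun _ _ _ hb => hb.1

lemma extNbhd_deleteEdges_escapingEdges_subset {U M : Set V} (hMU : M ⊆ U) :
    extNbhd (G.deleteEdges (escapingEdges G U M)) U ⊆ extNbhd G M \ U := by
  rintro v ⟨hvU, u, huU, huv⟩
  rw [deleteEdges_adj] at huv
  by_contra hv
  have hvM : v ∉ extNbhd G M := fun h => hv ⟨h, hvU⟩
  have huM : u ∉ M := fun hu => hvM ⟨fun h => hvU (hMU h), u, hu, huv.1⟩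
  exact huv.2 <| Set.mem_biUnion (x := u) ⟨huU, huM⟩ ⟨v, ⟨huv.1, fun h => h.elim hvU hvM⟩, rfl⟩

section Maximiser

variable [Finite V] {U M : Set V} {μ : ℝ}

lemma ncard_neighborSet_diff_le_of_isMax (hMU : M ⊆ U)
    (hmax : ∀ W ⊆ U, surplus G U μ W ≤ surplus G U μ M) {u : V} (huU : u ∈ U) (huM : u ∉ M) :
    ((G.neighborSet u \ (U ∪ extNbhd G M)).ncard : ℝ) ≤ μ := by
  have hdisj : Disjoint (extNbhd G M \ U) (G.neighborSet u \ (U ∪ extNbhd G M)) :=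
    Set.disjoint_left.2 fun _ hx hx' => hx'.2 (Or.inr hx.1)
  have hsub : (extNbhd G M \ U) ∪ (G.neighborSet u \ (U ∪ extNbhd G M)) ⊆
      extNbhd G (insert u M) \ U := by
    rintro x (⟨⟨-, w, hw, hwx⟩, hxU⟩ | ⟨hux, hx⟩)
    · refine ⟨⟨?_, w, Set.mem_insert_of_mem u hw, hwx⟩, hxU⟩
      rintro (rfl | hxM)
      exacts [hxU huU, hxU (hMU hxM)]
    · have hxU : x ∉ U := fun h => hx (Or.inl h)
      refine ⟨⟨?_, u, Set.mem_insert u M, hux⟩, hxU⟩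
      rintro (rfl | hxM)
      exacts [hxU huU, hxU (hMU hxM)]
  have hcard : ((extNbhd G M \ U).ncard : ℝ) + (G.neighborSet u \ (U ∪ extNbhd G M)).ncard ≤
      (extNbhd G (insert u M) \ U).ncard := by
    exact_mod_cast (Set.ncard_union_eq hdisj).symm.trans_le (Set.ncard_le_ncard hsub)
  have hins := hmax (insert u M) (Set.insert_subset huU hMU)
  simp only [surplus, Set.ncard_insert_of_notMem huM] at hins
  push_cast at hins
  linarith

lemma ncard_escapingEdges_le (hμ : 0 ≤ μ) (hMU : M ⊆ U)
    (hmax : ∀ W ⊆ U, surplus G U μ W ≤ surplus G U μ M) :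
    ((escapingEdges G U M).ncard : ℝ) ≤ μ * U.ncard := by
  set D := (U \ M).toFinite.toFinset
  calc ((escapingEdges G U M).ncard : ℝ)
      ≤ ∑ a ∈ D, ((G.neighborSet a \ (U ∪ extNbhd G M)).ncard : ℝ) := by
        have h := D.set_ncard_biUnion_le
          fun a => (fun b => s(a, b)) '' (G.neighborSet a \ (U ∪ extNbhd G M))
        simp only [D, Set.Finite.mem_toFinset] at h
        exact_mod_cast h.trans (Finset.sum_le_sum fun a _ => Set.ncard_image_le (Set.toFinite _))
    _ ≤ ∑ _a ∈ D, μ := Finset.sum_le_sum fun a ha => by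
        obtain ⟨haU, haM⟩ := (Set.Finite.mem_toFinset _).1 ha
        exact ncard_neighborSet_diff_le_of_isMax G hMU hmax haU haM
    _ = μ * (U \ M).ncard := by
        rw [Finset.sum_const, nsmul_eq_mul, mul_comm, Set.ncard_eq_toFinset_card _ (Set.toFinite _)]
    _ ≤ μ * U.ncard := by
        gcongr
        exacts [U.toFinite, Set.sdiff_subset]

end Maximiser

section Expander

variable {G} [Fintype V] {γ s μ : ℝ}

lemma IsExpander.mul_ncard_le_ncard_extNbhd_diff {U M : Set V} (hG : IsExpander G γ s)
    (hμ : 0 ≤ μ) (hμs : μ ≤ s) (hU₁ : 1 ≤ U.ncard) (hU : (U.ncard : ℝ) ≤ 2 / 3 * Fintype.card V)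
    (hMU : M ⊆ U) (hmax : ∀ W ⊆ U, surplus G U μ W ≤ surplus G U μ M) :
    γ * U.ncard ≤ (extNbhd G M \ U).ncard :=
  calc γ * U.ncard ≤ (extNbhd (G.deleteEdges (escapingEdges G U M)) U).ncard :=
        hG U _ (escapingEdges_subset_edgeSet G U M) hU₁ hU <|
          (ncard_escapingEdges_le G hμ hMU hmax).trans (by gcongr)
    _ ≤ (extNbhd G M \ U).ncard := by
        exact_mod_cast Set.ncard_le_ncard (extNbhd_deleteEdges_escapingEdges_subset G hMU)

lemma IsExpander.exists_subset_mul_ncard_le_ncard_extNbhd (hG : IsExpander G γ s)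
    (hγ : 0 < γ) (hγμ : γ ≤ 2 * μ) (hμs : μ ≤ s) (U : Set V)
    (hU : (U.ncard : ℝ) ≤ 2 / 3 * Fintype.card V) :
    ∃ U' ⊆ U, μ * U'.ncard ≤ ((extNbhd G U').ncard : ℝ) ∧ γ * U.ncard / (2 * μ) ≤ U'.ncard := by
  obtain rfl | hUne := U.eq_empty_or_nonempty
  · exact ⟨∅, subset_rfl, by simp, by simp⟩
  have hμ : 0 < μ := by linarith
  obtain ⟨M, hMU, hmax⟩ := Set.exists_max_image {W | W ⊆ U} (surplus G U μ)
    U.toFinite.finite_subsets ⟨∅, Set.empty_subset U⟩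
  set a := (extNbhd G M \ U).ncard
  have hMa : μ * M.ncard ≤ a := by
    simpa [surplus] using hmax ∅ (Set.empty_subset U)
  have hU₁ : 1 ≤ U.ncard := (Set.ncard_pos U.toFinite).2 hUne
  have hUa : γ * U.ncard ≤ a := hG.mul_ncard_le_ncard_extNbhd_diff hμ.le hμs hU₁ hU hMU hmax
  have hM : M.Nonempty := by
    rw [Set.nonempty_iff_ne_empty]
    rintro rfl
    have : (0 : ℝ) < γ * U.ncard := mul_pos hγ (by exact_mod_cast hU₁)
    simp [a] at hUa
    linarith
  have hμa : μ ≤ a := by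
    have : (1 : ℝ) ≤ M.ncard := by exact_mod_cast (Set.ncard_pos M.toFinite).2 hM
    nlinarith
  obtain ⟨P, hMP, hPU, hP⟩ := Set.exists_subsuperset_card_eq (n := min U.ncard ⌊a / μ⌋₊) hMU
    (le_min (Set.ncard_le_ncard hMU) (Nat.le_floor (by rw [le_div_iff₀ hμ]; linarith)))
    (min_le_left _ _)
  have hfloor : (⌊a / μ⌋₊ : ℝ) ≤ a / μ := Nat.floor_le (by positivity)
  refine ⟨P, hPU, ?_, ?_⟩
  · calc μ * P.ncard ≤ μ * ⌊a / μ⌋₊ := by rw [hP]; gcongr; exact_mod_cast min_le_right _ _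
      _ ≤ μ * (a / μ) := mul_le_mul_of_nonneg_left hfloor hμ.le
      _ = a := by field_simp
      _ ≤ (extNbhd G P).ncard := by
          exact_mod_cast Set.ncard_le_ncard (extNbhd_diff_subset_extNbhd G hMP hPU)
  · have hfloor₁ : (1 : ℝ) ≤ ⌊a / μ⌋₊ := by
      exact_mod_cast Nat.le_floor (by rw [le_div_iff₀ hμ]; simpa using hμa)
    have hfloor₂ : (a : ℝ) / μ < ⌊a / μ⌋₊ + 1 := Nat.lt_floor_add_one _
    rw [hP, Nat.cast_min, le_min_iff]
    constructor
    · rw [div_le_iff₀ (by positivity)]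
      nlinarith [mul_le_mul_of_nonneg_left hγμ (Nat.cast_nonneg (α := ℝ) U.ncard)]
    · calc γ * U.ncard / (2 * μ) ≤ a / (2 * μ) := by gcongr
        _ = a / μ / 2 := by ring
        _ ≤ ⌊a / μ⌋₊ := by linarith

end Expander

end ExpanderNeighbourhoods

/-- If `G` is an `n`-vertex `(γ, s)`-expander with `0 < γ < 1` and
`s ≥ μ ≥ 1`, then every `U ⊆ V(G)` with `|U| ≤ (2/3)n` contains a subset `U'` with
`|N_G(U')| ≥ μ|U'|` and `|U'| ≥ γ|U|/(12μ)`. -/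
theorem statement10 {V : Type*} [Fintype V] (G : SimpleGraph V) (γ s μ : ℝ)
    (hγ0 : 0 < γ) (hγ1 : γ < 1) (hμ : 1 ≤ μ) (hs : μ ≤ s)
    (hexp : ∀ (U : Set V) (F : Set (Sym2 V)), F ⊆ G.edgeSet →
      1 ≤ U.ncard → (U.ncard : ℝ) ≤ 2 / 3 * (Fintype.card V : ℝ) →
      (F.ncard : ℝ) ≤ s * U.ncard →
      γ * U.ncard ≤ ((extNbhd (G.deleteEdges F) U).ncard : ℝ)) :
    ∀ U : Set V, (U.ncard : ℝ) ≤ 2 / 3 * (Fintype.card V : ℝ) →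
      ∃ U' ⊆ U, μ * U'.ncard ≤ ((extNbhd G U').ncard : ℝ) ∧
        γ * U.ncard / (12 * μ) ≤ (U'.ncard : ℝ) := by
  intro U hU
  have hG : IsExpander G γ s := hexp
  obtain ⟨U', hU'U, hN, hcard⟩ :=
    hG.exists_subset_mul_ncard_le_ncard_extNbhd hγ0 (by linarith) hs U hU
  refine ⟨U', hU'U, hN, le_trans ?_ hcard⟩
  have : 0 < μ := by linarith
  gcongr
  linarith
end
end

section
/- Let G be a connected d-regular vertex-transitive graph. Then G is d-edge-connected: removing any set of fewer than d edges leaves G connected. -/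
/-!
Call a vertex set `A` an atom if `0 < |A| < |V|`, its edge boundary is as small as possible, and
among such sets `|A|` is as small as possible. Submodularity of the boundary size, together with
`|A| ≤ |V| / 2` (compare `A` with its complement), shows that two atoms that meet are equal.
Automorphisms map atoms to atoms, so by vertex-transitivity every vertex of `A` has the same
number `k < |A|` of neighbours in `A`. The boundary of `A` then has `|A| (d - k)` edges, where
`d - k ≥ 1` by connectivity, and `|A| (d - k) ≥ (k + 1)(d - k) ≥ d`. So every edge cut has at
least `d` edges, and deleting fewer than `d` edges leaves the graph connected.
-/

namespace SimpleGraph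

open Finset

variable {V W : Type*} [Fintype V] [DecidableEq V] (G : SimpleGraph V) [DecidableRel G.Adj]

def cutSize (S : Finset V) : ℕ :=
  #{p : V × V | p.1 ∈ S ∧ p.2 ∉ S ∧ G.Adj p.1 p.2}

theorem cutSize_inter_add_cutSize_union_le (A B : Finset V) :
    G.cutSize (A ∩ B) + G.cutSize (A ∪ B) ≤ G.cutSize A + G.cutSize B := by
  simp only [cutSize, card_filter, ← sum_add_distrib]
  refine sum_le_sum fun p _ => ?_
  by_cases h1 : p.1 ∈ A <;> by_cases h2 : p.1 ∈ B <;> by_cases h3 : p.2 ∈ A <;>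
    by_cases h4 : p.2 ∈ B <;> simp [h1, h2, h3, h4]

theorem cutSize_compl (S : Finset V) : G.cutSize Sᶜ = G.cutSize S :=
  card_equiv (Equiv.prodComm V V) fun p => by
    simp only [mem_filter, mem_univ, mem_compl, not_not, Equiv.prodComm_apply, Prod.fst_swap,
      Prod.snd_swap, true_and, G.adj_comm p.1]
    tauto

theorem cutSize_map [Fintype W] [DecidableEq W] {H : SimpleGraph W} [DecidableRel H.Adj]
    (φ : G ≃g H) (S : Finset V) : H.cutSize (S.map φ.toEquiv.toEmbedding) = G.cutSize S :=
  (card_equiv (φ.toEquiv.prodCongr φ.toEquiv) fun p => by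
    simp [-mem_map_equiv, φ.map_adj_iff]).symm

theorem card_neighborFinset_inter_map [Fintype W] [DecidableEq W] {H : SimpleGraph W}
    [DecidableRel H.Adj] (φ : G ≃g H) (S : Finset V) (v : V) :
    #(H.neighborFinset (φ v) ∩ S.map φ.toEquiv.toEmbedding) = #(G.neighborFinset v ∩ S) :=
  (card_equiv φ.toEquiv fun w => by simp [-mem_map_equiv, φ.map_adj_iff]).symm

theorem cutSize_eq_sum (S : Finset V) : G.cutSize S = ∑ v ∈ S, #(G.neighborFinset v \ S) := by
  rw [cutSize, card_eq_sum_card_fiberwise (f := Prod.fst) (t := S)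
    fun p hp => (mem_filter.1 hp).2.1]
  refine sum_congr rfl fun v hv => ?_
  refine card_nbij' Prod.snd (fun w => (v, w)) ?_ ?_ ?_ ?_ <;> intro p hp <;> aesop

theorem cutSize_pos (h : G.Preconnected) {S : Finset V} (hS : S.Nonempty) (hSc : Sᶜ.Nonempty) :
    0 < G.cutSize S := by
  obtain ⟨u, hu⟩ := hS
  obtain ⟨w, hw⟩ := hSc
  obtain ⟨d, -, hd⟩ := (h u w).some.exists_boundary_dart S hu (mem_compl.1 hw)
  exact card_pos.2 ⟨(d.fst, d.snd), mem_filter.2 ⟨mem_univ _, hd.1, hd.2, d.adj⟩⟩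

theorem cutSize_le_ncard {F : Set (Sym2 V)} {S : Finset V}
    (hS : ∀ v ∈ S, ∀ w, (G.deleteEdges F).Adj v w → w ∈ S) : G.cutSize S ≤ F.ncard := by
  rw [Set.ncard_eq_toFinset_card F (Set.toFinite F)]
  refine card_le_card_of_injOn (fun p => s(p.1, p.2)) (fun p hp => ?_) ?_
  · simp only [coe_filter, mem_univ, true_and, Set.mem_ofPred_eq] at hp
    by_contra hpF
    exact hp.2.1 (hS _ hp.1 _ (deleteEdges_adj.2 ⟨hp.2.2, by simpa using hpF⟩))
  · rintro ⟨a, b⟩ hab ⟨c, e⟩ hce he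
    simp only [coe_filter, mem_univ, true_and, Set.mem_ofPred_eq] at hab hce
    rcases Sym2.eq_iff.1 he with ⟨rfl, rfl⟩ | ⟨rfl, rfl⟩
    · rfl
    · exact absurd hab.1 hce.2.1

theorem connected_deleteEdges_of_ncard_lt_cutSize [Nonempty V] {F : Set (Sym2 V)}
    (h : ∀ S : Finset V, 0 < #S → #S < Fintype.card V → F.ncard < G.cutSize S) :
    (G.deleteEdges F).Connected := by
  classical
  refine ⟨fun u v => by_contra fun huv => ?_⟩
  let S : Finset V := {w | (G.deleteEdges F).Reachable u w}
  have hclosed : ∀ x ∈ S, ∀ y, (G.deleteEdges F).Adj x y → y ∈ S := by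
    simp only [S, mem_filter, mem_univ, true_and]
    exact fun x hx y hxy => hx.trans hxy.reachable
  have hlt := h S (card_pos.2 ⟨u, by simp [S]⟩)
    (card_lt_univ_of_notMem (by simpa [S] using huv))
  exact (G.cutSize_le_ncard hclosed).not_gt hlt

theorem le_cutSize_of_card_neighborFinset_inter_eq {d k : ℕ} (hreg : G.IsRegularOfDegree d)
    {S : Finset V} (hk : ∀ v ∈ S, #(G.neighborFinset v ∩ S) = k) (hS : S.Nonempty)
    (hcut : 0 < G.cutSize S) : d ≤ G.cutSize S := by
  obtain ⟨v, hv⟩ := hS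
  have hout : ∀ w ∈ S, #(G.neighborFinset w \ S) = d - k := fun w hw => by
    have := card_sdiff_add_card_inter (G.neighborFinset w) S
    rw [card_neighborFinset_eq_degree, hreg w, hk w hw] at this
    omega
  have hkS : k + 1 ≤ #S := hk v hv ▸ card_lt_card
    ⟨inter_subset_right, fun h => G.notMem_neighborFinset_self v (inter_subset_left (h hv))⟩
  rw [cutSize_eq_sum, sum_congr rfl hout, sum_const, smul_eq_mul] at hcut ⊢
  have hm : 1 ≤ d - k := Nat.pos_of_mul_pos_left hcut
  calc d ≤ (k + 1) * (d - k) := by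
        have := Nat.le_mul_of_pos_right k hm
        rw [add_one_mul]
        omega
    _ ≤ #S * (d - k) := Nat.mul_le_mul_right _ hkS

structure IsAtom (A : Finset V) : Prop where
  card_pos : 0 < #A
  card_lt : #A < Fintype.card V
  toLex_le : ∀ S : Finset V, 0 < #S → #S < Fintype.card V →
    toLex (G.cutSize A, #A) ≤ toLex (G.cutSize S, #S)

theorem exists_isAtom {S : Finset V} (hS : 0 < #S) (hSc : #S < Fintype.card V) :
    ∃ A, G.IsAtom A := by
  obtain ⟨A, hA, hmin⟩ := exists_min_image {S : Finset V | 0 < #S ∧ #S < Fintype.card V}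
    (fun S => toLex (G.cutSize S, #S)) ⟨S, mem_filter.2 ⟨mem_univ _, hS, hSc⟩⟩
  rw [mem_filter] at hA
  exact ⟨A, hA.2.1, hA.2.2, fun S hS hSc => hmin S (mem_filter.2 ⟨mem_univ _, hS, hSc⟩)⟩

namespace IsAtom

variable {G} {A B : Finset V}

theorem cutSize_le (hA : G.IsAtom A) {S : Finset V} (hS : 0 < #S) (hSc : #S < Fintype.card V) :
    G.cutSize A ≤ G.cutSize S :=
  (Prod.Lex.toLex_le_toLex'.1 (hA.toLex_le S hS hSc)).1

theorem card_le_of_cutSize_le (hA : G.IsAtom A) {S : Finset V} (hS : 0 < #S)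
    (hSc : #S < Fintype.card V) (h : G.cutSize S ≤ G.cutSize A) : #A ≤ #S :=
  (Prod.Lex.toLex_le_toLex'.1 (hA.toLex_le S hS hSc)).2 (le_antisymm (hA.cutSize_le hS hSc) h)

theorem two_mul_card_le (hA : G.IsAtom A) : 2 * #A ≤ Fintype.card V := by
  have hc := card_compl A
  have := hA.card_pos
  have := hA.card_lt
  have := hA.card_le_of_cutSize_le (S := Aᶜ) (by omega) (by omega) (G.cutSize_compl A).le
  omega

theorem map [Fintype W] [DecidableEq W] {H : SimpleGraph W} [DecidableRel H.Adj] (φ : G ≃g H)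
    (hA : G.IsAtom A) : H.IsAtom (A.map φ.toEquiv.toEmbedding) := by
  have hVW : Fintype.card V = Fintype.card W := Fintype.card_congr φ.toEquiv
  refine ⟨by rw [card_map]; exact hA.card_pos, by rw [card_map, ← hVW]; exact hA.card_lt,
    fun S hS hSc => ?_⟩
  obtain ⟨T, rfl⟩ : ∃ T : Finset V, T.map φ.toEquiv.toEmbedding = S :=
    ⟨S.map φ.symm.toEquiv.toEmbedding, by rw [Finset.map_map]; convert S.map_refl; ext; simp⟩
  rw [G.cutSize_map, G.cutSize_map, card_map, card_map]
  rw [card_map] at hS hSc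
  exact hA.toLex_le _ hS (hVW ▸ hSc)

theorem eq_of_inter_nonempty (hA : G.IsAtom A) (hB : G.IsAtom B) (h : (A ∩ B).Nonempty) :
    A = B := by
  obtain ⟨hcut, hcard⟩ : G.cutSize A = G.cutSize B ∧ #A = #B := by
    simpa using le_antisymm (hA.toLex_le B hB.card_pos hB.card_lt)
      (hB.toLex_le A hA.card_pos hA.card_lt)
  have hU := card_union_add_card_inter A B
  have hI := Finset.card_pos.2 h
  have hsub := G.cutSize_inter_add_cutSize_union_le A B
  have hAn := hA.two_mul_card_le
  have hIA := card_le_card (inter_subset_left (s₁ := A) (s₂ := B))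
  have hcI := hA.cutSize_le hI (by omega)
  -- `A ∪ B` is proper since `|A ∪ B| < |A| + |B| ≤ |V|`.
  have hcU := hA.cutSize_le (S := A ∪ B) (by omega) (by omega)
  have hAB : A ⊆ B := inter_eq_left.1 <|
    eq_of_subset_of_card_le inter_subset_left (hA.card_le_of_cutSize_le hI (by omega) (by omega))
  exact eq_of_subset_of_card_le hAB hcard.ge

theorem card_neighborFinset_inter_eq (htrans : ∀ u v : V, ∃ φ : G ≃g G, φ u = v)
    (hA : G.IsAtom A) {u v : V} (hu : u ∈ A) (hv : v ∈ A) :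
    #(G.neighborFinset v ∩ A) = #(G.neighborFinset u ∩ A) := by
  obtain ⟨φ, rfl⟩ := htrans u v
  have hφA : A.map φ.toEquiv.toEmbedding = A :=
    (hA.map φ).eq_of_inter_nonempty hA
      ⟨φ u, mem_inter.2 ⟨by simpa [-mem_map_equiv] using hu, hv⟩⟩
  conv_lhs => rw [← hφA]
  exact G.card_neighborFinset_inter_map φ A u

end IsAtom

theorem le_cutSize_of_transitive {d : ℕ} (htrans : ∀ u v : V, ∃ φ : G ≃g G, φ u = v)
    (hreg : G.IsRegularOfDegree d) (hconn : G.Preconnected) {S : Finset V} (hS : 0 < #S)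
    (hSc : #S < Fintype.card V) : d ≤ G.cutSize S := by
  obtain ⟨A, hA⟩ := G.exists_isAtom hS hSc
  obtain ⟨u, hu⟩ := card_pos.1 hA.card_pos
  have hAc : Aᶜ.Nonempty := card_pos.1 (by rw [card_compl]; exact Nat.sub_pos_of_lt hA.card_lt)
  calc d ≤ G.cutSize A :=
        G.le_cutSize_of_card_neighborFinset_inter_eq hreg
          (fun v hv => hA.card_neighborFinset_inter_eq htrans hu hv) ⟨u, hu⟩
          (G.cutSize_pos hconn ⟨u, hu⟩ hAc)
    _ ≤ G.cutSize S := hA.cutSize_le hS hSc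

end SimpleGraph

/-- Mader, Watkins: A connected `d`-regular vertex-transitive graph is
`d`-edge-connected: removing any set of fewer than `d` edges leaves it connected. -/
theorem statement13 {V : Type*} [Fintype V] (G : SimpleGraph V) (d : ℕ)
    (htrans : ∀ u v : V, ∃ φ : G ≃g G, φ u = v)
    (hreg : ∀ v : V, (G.neighborSet v).ncard = d)
    (hconn : G.Connected) :
    ∀ F : Set (Sym2 V), F ⊆ G.edgeSet → F.ncard < d →
      (G.deleteEdges F).Connected := by
  classical
  intro F _ hF
  have : Nonempty V := hconn.nonempty
  have hreg' : G.IsRegularOfDegree d := fun v => by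
    rw [← hreg v, ← Nat.card_coe_set_eq, Nat.card_eq_fintype_card, G.card_neighborSet_eq_degree]
  exact G.connected_deleteEdges_of_ncard_lt_cutSize fun S hS hSc =>
    hF.trans_le (G.le_cutSize_of_transitive htrans hreg' hconn.preconnected hS hSc)
end

section
/- For every sufficiently large m there exists a 103-regular bipartite multigraph K with vertex classes A₁ ∪ A₂ and B₁ ∪ B₂, where |A₁| = |B₁| = 2m and |A₂| = |B₂| = 5m, such that for every A₁′ ⊆ A₁ and B₁′ ⊆ B₁ with |A₁′| = |B₁′| ≥ m, there is a perfect matching in K between A₁′ ∪ A₂ and B₁′ ∪ B₂. -/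
/-!
Both sides consist of `m` blocks, each holding two vertices of `A₁` (resp. `B₁`) and five of `A₂`
(resp. `B₂`). Between `A₂` and `B₂` we put the union of 83 permutations `σ t` such that both `σ` and
`σ⁻¹` at least double every set of at most `2m` vertices; a union bound over the pairs `(X, Y)`
with `|Y| = 2|X|` shows that such permutations exist. Every vertex of `A₁` is joined to the five
`B₂`-vertices of its block, every vertex of `A₂` to the two `B₁`-vertices of its block, and parallel
`A₁`–`B₁` edges complete all degrees to 103 (these are never used in the matchings).

By a duality argument, Hall's condition only has to be checked for sets of at most half the size
of either side. Such a set either has half of its vertices in `A₂`, which expand, or more than half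
in `A₁`, whose blocks provide at least `5/4` times as many neighbours in `B₂`.
-/

open Finset Equiv

namespace Nat

theorem sub_mul_le_sub_mul {a b k : ℕ} (hab : a ≤ b) : (a - k) * b ≤ (b - k) * a := by
  rw [Nat.sub_mul, Nat.sub_mul, mul_comm b a]
  exact Nat.sub_le_sub_left (Nat.mul_le_mul_left k hab) _

theorem descFactorial_mul_pow_le {a b : ℕ} (hab : a ≤ b) (k : ℕ) :
    a.descFactorial k * b ^ k ≤ b.descFactorial k * a ^ k := by
  induction k with
  | zero => simp
  | succ k ih =>
    calc a.descFactorial (k + 1) * b ^ (k + 1)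
        = ((a - k) * b) * (a.descFactorial k * b ^ k) := by
          rw [descFactorial_succ, pow_succ]; ring
      _ ≤ ((b - k) * a) * (b.descFactorial k * a ^ k) :=
          Nat.mul_le_mul (sub_mul_le_sub_mul hab) ih
      _ = b.descFactorial (k + 1) * a ^ (k + 1) := by
          rw [descFactorial_succ, pow_succ]; ring

theorem choose_mul_pow_le {a b : ℕ} (hab : a ≤ b) (k : ℕ) :
    a.choose k * b ^ k ≤ b.choose k * a ^ k := by
  have h := descFactorial_mul_pow_le hab k
  rw [descFactorial_eq_factorial_mul_choose, descFactorial_eq_factorial_mul_choose,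
    mul_assoc, mul_assoc] at h
  exact Nat.le_of_mul_le_mul_left h k.factorial_pos

theorem choose_two_mul_le_sq (n x : ℕ) : n.choose (2 * x) ≤ n.choose x ^ 2 := by
  calc n.choose (2 * x) ≤ n.choose (2 * x) * (2 * x).choose x :=
        Nat.le_mul_of_pos_right _ (choose_pos (by omega))
    _ = n.choose x * (n - x).choose x := by rw [choose_mul (by omega)]; congr 2; omega
    _ ≤ n.choose x ^ 2 := by rw [sq]; gcongr; omega

theorem five_pow_mul_centralBinom_le {n x : ℕ} (h : 5 * x ≤ 2 * n) :
    5 ^ x * (2 * x).choose x ≤ 4 ^ x * n.choose x := by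
  have key := choose_mul_pow_le (a := 2 * x) (b := n) (by omega) x
  refine Nat.le_of_mul_le_mul_right (c := x ^ x) ?_ Nat.pow_self_pos
  calc 5 ^ x * (2 * x).choose x * x ^ x = (2 * x).choose x * (5 * x) ^ x := by ring
    _ ≤ (2 * x).choose x * (2 * n) ^ x := by gcongr
    _ = 2 ^ x * ((2 * x).choose x * n ^ x) := by ring
    _ ≤ 2 ^ x * (n.choose x * (2 * x) ^ x) := by gcongr
    _ = 4 ^ x * n.choose x * x ^ x := by
        rw [show (4 : ℕ) ^ x = 2 ^ x * 2 ^ x by rw [← mul_pow]; rfl]; ring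

theorem two_pow_mul_choose_mul_choose_mul_pow_le {n x : ℕ} (hx : 1 ≤ x) (h : 5 * x ≤ 2 * n) :
    2 ^ (x + 1) * n.choose x * n.choose (2 * x) * (2 * x).choose x ^ 83 ≤ n.choose x ^ 83 := by
  set c := n.choose x
  set b := (2 * x).choose x
  have hb : b ≤ 4 ^ x := by
    simpa [b, centralBinom_eq_two_mul_choose] using centralBinom_le_four_pow x
  have hbc : 5 ^ x * b ≤ 4 ^ x * c := five_pow_mul_centralBinom_le h
  have hpow : 2 ^ (x + 1) * 4 ^ (83 * x) ≤ 5 ^ (80 * x) :=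
    calc 2 ^ (x + 1) * 4 ^ (83 * x) ≤ 2 ^ (168 * x) := by
          rw [show (4 : ℕ) = 2 ^ 2 by rfl, ← pow_mul, ← pow_add]
          exact Nat.pow_le_pow_right (by norm_num) (by omega)
      _ ≤ 5 ^ (80 * x) := by
          rw [pow_mul, pow_mul]
          exact Nat.pow_le_pow_left (by norm_num) x
  refine le_of_mul_le_mul_left ?_ (by positivity : 0 < 5 ^ (80 * x))
  calc 5 ^ (80 * x) * (2 ^ (x + 1) * c * n.choose (2 * x) * b ^ 83)
      ≤ 5 ^ (80 * x) * (2 ^ (x + 1) * c * c ^ 2 * b ^ 83) := by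
        gcongr; exact choose_two_mul_le_sq n x
    _ = 2 ^ (x + 1) * c ^ 3 * b ^ 3 * (5 ^ x * b) ^ 80 := by ring
    _ ≤ 2 ^ (x + 1) * c ^ 3 * (4 ^ x) ^ 3 * (4 ^ x * c) ^ 80 := by gcongr
    _ = (2 ^ (x + 1) * 4 ^ (83 * x)) * c ^ 83 := by ring
    _ ≤ 5 ^ (80 * x) * c ^ 83 := by gcongr

end Nat

namespace Finset

theorem sum_range_lt_of_two_pow_mul_le {a : ℕ → ℕ} {T k : ℕ} (hT : 0 < T)
    (h : ∀ j < k, 2 ^ (j + 1) * a j ≤ T) : ∑ j ∈ range k, a j < T := by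
  suffices H : 2 ^ k * ∑ j ∈ range k, a j + T ≤ 2 ^ k * T by
    by_contra! hlt
    nlinarith [Nat.one_le_two_pow (n := k)]
  induction k with
  | zero => simp
  | succ k ih =>
    have hk := h k (by omega)
    have ih := ih fun j hj => h j (by omega)
    rw [sum_range_succ, pow_succ]
    rw [pow_succ] at hk
    linarith

theorem card_le_card_image_fst_mul {α β : Type*} [DecidableEq α] [Fintype β]
    (Z : Finset (α × β)) : #Z ≤ #(Z.image Prod.fst) * Fintype.card β := by
  calc #Z ≤ #(Z.image Prod.fst ×ˢ (univ : Finset β)) :=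
        card_le_card fun p hp => mem_product.mpr ⟨mem_image_of_mem _ hp, mem_univ _⟩
    _ = #(Z.image Prod.fst) * Fintype.card β := by rw [card_product, card_univ]

theorem sum_ite_fst_eq {α β : Type*} [Fintype α] [DecidableEq α] [Fintype β] (a : α) (c : ℕ) :
    ∑ q : α × β, (if a = q.1 then c else 0) = Fintype.card β * c := by
  rw [Fintype.sum_prod_type_right]
  simp

theorem exists_perm_image_eq {W : Type*} [DecidableEq W] {X X' : Finset W} (h : #X = #X') :
    ∃ g : Perm W, X.image g = X' := by
  have := Set.powersetCard.isPretransitive (α := W) (n := #X')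
  obtain ⟨g, hg⟩ := MulAction.exists_smul_eq (Perm W) (⟨X, h⟩ : Set.powersetCard W #X') ⟨X', rfl⟩
  exact ⟨g, by simpa [smul_finset_def, Perm.smul_def] using congrArg Subtype.val hg⟩

section Hall

variable {V : Type*} [DecidableEq V] (r : V → V → Prop) [DecidableRel r] {S T : Finset V}

theorem all_card_le_biUnion_card_of_small (hST : #S = #T)
    (hS : ∀ s ⊆ S, 2 * #s ≤ #S + 1 → #s ≤ #(s.biUnion fun u => {v ∈ T | r u v}))
    (hT : ∀ z ⊆ T, 2 * #z ≤ #T + 1 → #z ≤ #(z.biUnion fun v => {u ∈ S | r u v})) :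
    ∀ s ⊆ S, #s ≤ #(s.biUnion fun u => {v ∈ T | r u v}) := by
  intro s hs
  by_cases hsmall : 2 * #s ≤ #S + 1
  · exact hS s hs hsmall
  -- A large `s` has at least half of `T` as neighbourhood `N`, and the small set `T \ N` only
  -- sees `S \ s`; Hall's condition for `T \ N` then gives `#s ≤ #N`.
  set N := s.biUnion fun u => {v ∈ T | r u v}
  have hNT : N ⊆ T := biUnion_subset.mpr fun _ _ => filter_subset _ _
  obtain ⟨s', hs's, hs'⟩ := exists_subset_card_eq (s := s) (n := (#S + 1) / 2) (by omega)
  have hN : (#S + 1) / 2 ≤ #N := hs' ▸ (hS s' (hs's.trans hs) (by omega)).trans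
    (card_le_card (biUnion_subset_biUnion_of_subset_left _ hs's))
  have hZ : (T \ N).biUnion (fun v => {u ∈ S | r u v}) ⊆ S \ s := by
    intro u hu
    obtain ⟨v, hv, hu⟩ := mem_biUnion.mp hu
    obtain ⟨huS, huv⟩ := mem_filter.mp hu
    refine mem_sdiff.mpr ⟨huS, fun hus => (mem_sdiff.mp hv).2 ?_⟩
    exact mem_biUnion.mpr ⟨u, hus, mem_filter.mpr ⟨(mem_sdiff.mp hv).1, huv⟩⟩
  have hZcard := (hT (T \ N) sdiff_subset (by rw [card_sdiff_of_subset hNT]; omega)).trans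
    (card_le_card hZ)
  rw [card_sdiff_of_subset hNT, card_sdiff_of_subset hs] at hZcard
  have := card_le_card hNT
  have := card_le_card hs
  omega

theorem exists_bijOn_of_small_card_le_biUnion_card (hST : #S = #T)
    (hS : ∀ s ⊆ S, 2 * #s ≤ #S + 1 → #s ≤ #(s.biUnion fun u => {v ∈ T | r u v}))
    (hT : ∀ z ⊆ T, 2 * #z ≤ #T + 1 → #z ≤ #(z.biUnion fun v => {u ∈ S | r u v})) :
    ∃ f : V → V, Set.BijOn f S T ∧ ∀ u ∈ S, r u (f u) := by
  have hall := all_card_le_biUnion_card_of_small r hST hS hT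
  obtain ⟨g, hg, hgT⟩ := (all_card_le_biUnion_card_iff_exists_injective
      fun u : S => {v ∈ T | r u v}).mp fun s => by
    have := hall (s.image Subtype.val) fun _ hu => by
      obtain ⟨u, -, rfl⟩ := mem_image.mp hu; exact u.2
    rwa [image_biUnion, card_image_of_injective _ Subtype.val_injective] at this
  have hgT : ∀ u : S, g u ∈ T ∧ r u (g u) := fun u => mem_filter.mp (hgT u)
  let f : V → V := fun u => if h : u ∈ S then g ⟨u, h⟩ else u
  have hf : ∀ u (h : u ∈ S), f u = g ⟨u, h⟩ := fun u h => dif_pos h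
  have hmaps : Set.MapsTo f S T := fun u hu => hf u hu ▸ (hgT ⟨u, hu⟩).1
  have hinj : Set.InjOn f S := fun u hu w hw huw => by
    rw [hf u hu, hf w hw] at huw
    exact congrArg Subtype.val (hg huw)
  refine ⟨f, ⟨hmaps, hinj, surjOn_of_injOn_of_card_le f hmaps hinj hST.ge⟩, fun u hu => ?_⟩
  exact hf u hu ▸ (hgT ⟨u, hu⟩).2

end Hall

end Finset

theorem Equiv.Perm.card_image_subset_mul_choose {W : Type*} [Fintype W] [DecidableEq W]
    (X Y : Finset W) :
    #{π : Perm W | X.image π ⊆ Y} * (Fintype.card W).choose #X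
      = (Fintype.card W).factorial * (#Y).choose #X := by
  -- Double count the pairs `(X', π)` with `#X' = #X` and `π '' X' ⊆ Y`: as `Perm W` acts
  -- transitively on the sets of a given size, every `X'` occurs in equally many pairs.
  have hconst : ∀ X' ∈ powersetCard #X (univ : Finset W),
      #{π : Perm W | X'.image π ⊆ Y} = #{π : Perm W | X.image π ⊆ Y} := by
    intro X' hX'
    obtain ⟨g, rfl⟩ := exists_perm_image_eq (mem_powersetCard.mp hX').2.symm
    exact card_equiv (Equiv.mulRight g) fun π => by simp [image_image, Function.comp_def]
  have hfiber : ∀ π : Perm W,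
      #{X' ∈ powersetCard #X (univ : Finset W) | X'.image π ⊆ Y} = (#Y).choose #X := by
    intro π
    have : {X' ∈ powersetCard #X (univ : Finset W) | X'.image π ⊆ Y}
        = powersetCard #X (Y.image π.symm) := by
      ext X'
      simp [subset_iff, and_comm, Equiv.symm_apply_eq]
    rw [this, card_powersetCard, card_image_of_injective _ π.symm.injective]
  have := sum_card_bipartiteAbove_eq_sum_card_bipartiteBelow
    (fun (X' : Finset W) (π : Perm W) => X'.image π ⊆ Y) (s := powersetCard #X univ) (t := univ)
  simp only [bipartiteAbove, bipartiteBelow] at this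
  rw [sum_congr rfl hconst, sum_congr rfl fun π _ => hfiber π] at this
  simp only [sum_const, card_powersetCard, card_univ, Fintype.card_perm, smul_eq_mul] at this
  linarith

theorem exists_not_and_not_inv {G : Type*} [Group G] [Fintype G] (P : G → Prop)
    [DecidablePred P] (h : 2 * #{g | P g} < Fintype.card G) : ∃ g, ¬P g ∧ ¬P g⁻¹ := by
  classical
  have hinv : #{g : G | P g⁻¹} = #{g | P g} := card_equiv (Equiv.inv G) fun g => by simp
  have hlt : #{g : G | P g ∨ P g⁻¹} < #(univ : Finset G) :=
    calc #{g : G | P g ∨ P g⁻¹} ≤ #{g | P g} + #{g : G | P g⁻¹} := by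
          rw [filter_or]; exact card_union_le _ _
      _ < #(univ : Finset G) := by rw [hinv, card_univ]; omega
  obtain ⟨g, -, hg⟩ := exists_mem_notMem_of_card_lt_card hlt
  exact ⟨g, by simpa [not_or] using hg⟩

namespace RobustMatching

section Expansion

variable {W : Type*} [Fintype W] [DecidableEq W] {d : ℕ}

def permNbhd (σ : Fin d → Perm W) (X : Finset W) : Finset W :=
  univ.biUnion fun t => X.image (σ t)

def Expands (σ : Fin d → Perm W) : Prop :=
  ∀ X : Finset W, 5 * #X ≤ 2 * Fintype.card W → 2 * #X ≤ #(permNbhd σ X)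

variable (W d) in
def nonExpanding (x : ℕ) : Finset (Fin d → Perm W) :=
  {σ | ∃ X : Finset W, #X = x ∧ #(permNbhd σ X) < 2 * x}

theorem card_nonExpanding_mul_le {x : ℕ} (hx : 2 * x ≤ Fintype.card W) :
    #(nonExpanding W d x) * (Fintype.card W).choose x ^ d
      ≤ (Fintype.card W).choose x * (Fintype.card W).choose (2 * x)
        * ((Fintype.card W).factorial * (2 * x).choose x) ^ d := by
  set n := Fintype.card W
  set pairs := powersetCard x (univ : Finset W) ×ˢ powersetCard (2 * x) (univ : Finset W)
  set bad : Finset W × Finset W → Finset (Fin d → Perm W) := fun XY =>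
    Fintype.piFinset fun _ => {π : Perm W | XY.1.image π ⊆ XY.2}
  have hsub : nonExpanding W d x ⊆ pairs.biUnion bad := by
    intro σ hσ
    obtain ⟨X, hX, hlt⟩ := (mem_filter.mp hσ).2
    obtain ⟨Y, hNY, hY⟩ := exists_superset_card_eq hlt.le hx
    refine mem_biUnion.mpr ⟨(X, Y), by simp [pairs, hX, hY], Fintype.mem_piFinset.mpr fun t => ?_⟩
    exact mem_filter.mpr ⟨mem_univ _, (subset_biUnion_of_mem _ (mem_univ t)).trans hNY⟩
  have hbad : ∀ XY ∈ pairs, #(bad XY) * n.choose x ^ d = (n.factorial * (2 * x).choose x) ^ d := by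
    rintro ⟨X, Y⟩ hXY
    obtain ⟨rfl, hY⟩ : #X = x ∧ #Y = 2 * x := by simpa [pairs] using hXY
    rw [Fintype.card_piFinset, prod_const, card_univ, Fintype.card_fin, ← mul_pow,
      Perm.card_image_subset_mul_choose, hY]
  calc _ ≤ (∑ XY ∈ pairs, #(bad XY)) * n.choose x ^ d := by
        gcongr; exact (card_le_card hsub).trans card_biUnion_le
    _ = ∑ XY ∈ pairs, (n.factorial * (2 * x).choose x) ^ d := by
        rw [sum_mul]; exact sum_congr rfl hbad
    _ = _ := by simp [pairs, card_powersetCard, n]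

theorem two_pow_mul_card_nonExpanding_le {x : ℕ} (hx : 1 ≤ x) (h : 5 * x ≤ 2 * Fintype.card W) :
    2 ^ (x + 1) * #(nonExpanding W 83 x) ≤ (Fintype.card W).factorial ^ 83 := by
  set n := Fintype.card W
  refine le_of_mul_le_mul_right ?_ (pow_pos (Nat.choose_pos (by omega : x ≤ n)) 83)
  calc _ = 2 ^ (x + 1) * (#(nonExpanding W 83 x) * n.choose x ^ 83) := by ring
    _ ≤ 2 ^ (x + 1) * (n.choose x * n.choose (2 * x) * (n.factorial * (2 * x).choose x) ^ 83) :=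
        Nat.mul_le_mul_left _ (card_nonExpanding_mul_le (by omega))
    _ = n.factorial ^ 83 *
          (2 ^ (x + 1) * n.choose x * n.choose (2 * x) * (2 * x).choose x ^ 83) := by
        ring
    _ ≤ n.factorial ^ 83 * n.choose x ^ 83 := by
        gcongr; exact Nat.two_pow_mul_choose_mul_choose_mul_pow_le hx h

variable (W) in
theorem exists_expands_and_expands_inv : ∃ σ : Fin 83 → Perm W, Expands σ ∧ Expands σ⁻¹ := by
  set n := Fintype.card W
  let P : (Fin 83 → Perm W) → Prop := fun σ =>
    ∃ X : Finset W, 1 ≤ #X ∧ 5 * #X ≤ 2 * n ∧ #(permNbhd σ X) < 2 * #X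
  have hexp : ∀ σ, ¬P σ → Expands σ := fun σ hσ X hX => by
    by_contra! hlt
    exact hσ ⟨X, by omega, hX, hlt⟩
  have hsub : ({σ | P σ} : Finset _) ⊆
      (range (2 * n / 5)).biUnion fun j => nonExpanding W 83 (j + 1) := by
    intro σ hσ
    obtain ⟨X, h1, h5, hlt⟩ := (mem_filter.mp hσ).2
    refine mem_biUnion.mpr ⟨#X - 1, mem_range.mpr (by omega), mem_filter.mpr ⟨mem_univ _, X, ?_⟩⟩
    exact ⟨by omega, by rwa [Nat.sub_add_cancel h1]⟩
  have hcount : 2 * #{σ | P σ} < Fintype.card (Fin 83 → Perm W) :=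
    calc 2 * #{σ | P σ} ≤ ∑ j ∈ range (2 * n / 5), 2 * #(nonExpanding W 83 (j + 1)) := by
          rw [← mul_sum]; gcongr; exact (card_le_card hsub).trans card_biUnion_le
      _ < n.factorial ^ 83 := by
          refine sum_range_lt_of_two_pow_mul_le (by positivity) fun j hj => ?_
          rw [← mul_assoc, ← pow_succ]
          exact two_pow_mul_card_nonExpanding_le (by omega) (by omega)
      _ = Fintype.card (Fin 83 → Perm W) := by simp [n, Fintype.card_perm]
  obtain ⟨σ, h, hinv⟩ := exists_not_and_not_inv P hcount
  exact ⟨σ, hexp σ h, hexp σ⁻¹ hinv⟩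

end Expansion

section BlockGraph

variable {m : ℕ}

abbrev BlockVert (m : ℕ) := (Fin m × Fin 2) ⊕ (Fin m × Fin 5)

def blockGraph (σ : Fin 83 → Perm (Fin m × Fin 5)) : BlockVert m → BlockVert m → ℕ
  | .inl p, .inl q => if p = q then 53 else 0
  | .inl p, .inr q => if p.1 = q.1 then 10 else 0
  | .inr p, .inl q => if p.1 = q.1 then 10 else 0
  | .inr p, .inr q => #{t | σ t p = q}

theorem blockGraph_inv (σ : Fin 83 → Perm (Fin m × Fin 5)) (u v : BlockVert m) :
    blockGraph σ⁻¹ v u = blockGraph σ u v := by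
  rcases u with p | p <;> rcases v with q | q
  · simp [blockGraph, eq_comm]
  · simp [blockGraph, eq_comm]
  · simp [blockGraph, eq_comm]
  · simp [blockGraph, Perm.inv_def, Equiv.eq_symm_apply, eq_comm]

theorem sum_blockGraph (σ : Fin 83 → Perm (Fin m × Fin 5)) (u : BlockVert m) :
    ∑ v, blockGraph σ u v = 103 := by
  rcases u with p | p
  · simp [blockGraph, Fintype.sum_sum_type, sum_ite_fst_eq]
  · rw [Fintype.sum_sum_type]
    simp only [blockGraph]
    rw [← card_eq_sum_card_fiberwise (fun t _ => mem_univ (σ t p))]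
    simp [sum_ite_fst_eq]

theorem sum_blockGraph_left (σ : Fin 83 → Perm (Fin m × Fin 5)) (v : BlockVert m) :
    ∑ u, blockGraph σ u v = 103 := by
  simp_rw [← blockGraph_inv σ]
  exact sum_blockGraph σ⁻¹ v

theorem card_le_card_biUnion_blockGraph {σ : Fin 83 → Perm (Fin m × Fin 5)} (hσ : Expands σ)
    {T : Finset (BlockVert m)} (hT : ∀ q, .inr q ∈ T) {s : Finset (BlockVert m)}
    (hs : 2 * #s ≤ 7 * m + 1) :
    #s ≤ #(s.biUnion fun u => {v ∈ T | 1 ≤ blockGraph σ u v}) := by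
  set N := s.biUnion fun u => {v ∈ T | 1 ≤ blockGraph σ u v}
  have hN : ∀ u ∈ s, ∀ q, 1 ≤ blockGraph σ u (.inr q) → .inr q ∈ N := fun u hu q huq =>
    mem_biUnion.mpr ⟨u, hu, mem_filter.mpr ⟨hT q, huq⟩⟩
  have hsplit := card_toLeft_add_card_toRight (u := s)
  rcases le_or_gt #s (2 * #s.toRight) with hR | hL
  · obtain ⟨X, hXs, hX⟩ := exists_subset_card_eq (s := s.toRight) (n := (#s + 1) / 2) (by omega)
    have hsub : (permNbhd σ X).map .inr ⊆ N := by
      intro v hv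
      obtain ⟨w, hw, rfl⟩ := mem_map.mp hv
      obtain ⟨t, -, hw⟩ := mem_biUnion.mp hw
      obtain ⟨p, hp, rfl⟩ := mem_image.mp hw
      exact hN _ (mem_toRight.mp (hXs hp)) _ (card_pos.mpr ⟨t, by simp⟩)
    calc #s ≤ 2 * #X := by omega
      _ ≤ #(permNbhd σ X) := hσ X (by simp; omega)
      _ ≤ #N := by simpa using card_le_card hsub
  · set blocks := s.toLeft.image Prod.fst
    have hsub : (blocks ×ˢ (univ : Finset (Fin 5))).map .inr ⊆ N := by
      intro v hv
      obtain ⟨⟨b, i⟩, hbi, rfl⟩ := mem_map.mp hv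
      obtain ⟨p, hp, rfl⟩ := mem_image.mp (mem_product.mp hbi).1
      exact hN _ (mem_toLeft.mp hp) _ (by simp [blockGraph])
    have : #s.toLeft ≤ #blocks * 2 := by simpa using card_le_card_image_fst_mul s.toLeft
    calc #s ≤ 5 * #blocks := by omega
      _ = #((blocks ×ˢ (univ : Finset (Fin 5))).map .inr) := by simp [mul_comm]
      _ ≤ #N := card_le_card hsub

theorem exists_bijOn_blockGraph {σ : Fin 83 → Perm (Fin m × Fin 5)} (hσ : Expands σ)
    (hσ' : Expands σ⁻¹) {S T : Finset (BlockVert m)} (hST : #S = #T)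
    (hS : ∀ q, .inr q ∈ S) (hT : ∀ q, .inr q ∈ T) :
    ∃ g, Set.BijOn g S T ∧ ∀ u ∈ S, 1 ≤ blockGraph σ u (g u) := by
  have hcard : ∀ U : Finset (BlockVert m), #U ≤ 7 * m := fun U =>
    (card_le_univ U).trans_eq (by simp; ring)
  refine exists_bijOn_of_small_card_le_biUnion_card _ hST
    (fun s _ hs => card_le_card_biUnion_blockGraph hσ hT (by have := hcard S; omega))
    (fun z _ hz => ?_)
  simp_rw [← blockGraph_inv σ]
  exact card_le_card_biUnion_blockGraph hσ' hS (by have := hcard T; omega)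

def blockEquiv (m : ℕ) : BlockVert m ≃ Fin (7 * m) :=
  (sumCongr finProdFinEquiv finProdFinEquiv).trans (finSumFinEquiv.trans (finCongr (by ring)))

theorem le_blockEquiv_inr (q : Fin m × Fin 5) : 2 * m ≤ (blockEquiv m (.inr q) : ℕ) := by
  simp [blockEquiv]; omega

end BlockGraph

end RobustMatching

open RobustMatching in
/-- For every sufficiently large `m` there is a 103-regular bipartite
multigraph `K` (given by edge multiplicities `M i j` between left vertex `i` and right
vertex `j`), with left part `A₁ ∪ A₂` and right part `B₁ ∪ B₂` where `A₁, B₁` are the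
first `2m` vertices and `A₂, B₂` the remaining `5m` vertices, such that for all
`A₁' ⊆ A₁` and `B₁' ⊆ B₁` with `|A₁'| = |B₁'| ≥ m` there is a perfect matching in `K`
between `A₁' ∪ A₂` and `B₁' ∪ B₂`. -/
theorem statement14 :
    ∃ m₀ : ℕ, ∀ m : ℕ, m₀ ≤ m →
      ∃ M : Fin (7 * m) → Fin (7 * m) → ℕ,
        (∀ i : Fin (7 * m), ∑ j : Fin (7 * m), M i j = 103) ∧
        (∀ j : Fin (7 * m), ∑ i : Fin (7 * m), M i j = 103) ∧
        ∀ A₁' B₁' : Finset (Fin (7 * m)),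
          (∀ i ∈ A₁', (i : ℕ) < 2 * m) → (∀ j ∈ B₁', (j : ℕ) < 2 * m) →
          A₁'.card = B₁'.card → m ≤ A₁'.card →
          ∃ f : Fin (7 * m) → Fin (7 * m),
            Set.BijOn f (↑(A₁' ∪ Finset.univ.filter (fun i => 2 * m ≤ (i : ℕ))))
              (↑(B₁' ∪ Finset.univ.filter (fun j => 2 * m ≤ (j : ℕ)))) ∧
            ∀ i ∈ A₁' ∪ Finset.univ.filter (fun i => 2 * m ≤ (i : ℕ)), 1 ≤ M i (f i) := by
  refine ⟨0, fun m _ => ?_⟩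
  obtain ⟨σ, hσ, hσ'⟩ := exists_expands_and_expands_inv (Fin m × Fin 5)
  set e := blockEquiv m
  refine ⟨fun i j => blockGraph σ (e.symm i) (e.symm j), fun i => ?_, fun j => ?_, ?_⟩
  · exact (e.symm.sum_comp _).trans (sum_blockGraph σ _)
  · exact (e.symm.sum_comp (blockGraph σ · (e.symm j))).trans (sum_blockGraph_left σ _)
  intro A₁' B₁' hA hB hAB _
  set F : Finset (Fin (7 * m)) := {i | 2 * m ≤ (i : ℕ)}
  have hinr : ∀ (C : Finset (Fin (7 * m))) q, .inr q ∈ (C ∪ F).image e.symm := fun C q =>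
    mem_image.mpr ⟨e (.inr q), by simp [F, e, le_blockEquiv_inr], by simp⟩
  have hcard : ∀ C : Finset (Fin (7 * m)), (∀ i ∈ C, (i : ℕ) < 2 * m) →
      #((C ∪ F).image e.symm) = #C + #F := fun C hC => by
    rw [card_image_of_injective _ e.symm.injective, card_union_of_disjoint]
    refine disjoint_left.mpr fun i hi hiF => ?_
    have := hC i hi
    simp only [F, mem_filter] at hiF
    omega
  obtain ⟨g, hg, hadj⟩ := exists_bijOn_blockGraph hσ hσ' (S := (A₁' ∪ F).image e.symm)
    (T := (B₁' ∪ F).image e.symm) (by rw [hcard A₁' hA, hcard B₁' hB, hAB]) (hinr _) (hinr _)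
  refine ⟨e ∘ g ∘ e.symm, ?_, fun i hi => by simpa using hadj (e.symm i) (mem_image_of_mem _ hi)⟩
  rw [coe_image, coe_image] at hg
  exact (e.image_eq_iff_bijOn.mp (e.image_symm_image _)).comp
    (hg.comp e.symm.injective.bijOn_image)
end

section
/- Let x, a, y be distinct vertices of a graph G and let ℓ ≥ 3 be an odd integer. Suppose Q₁ = u₀, …, u_ℓ is a path of length ℓ with u₀ = a, u_ℓ = y; Q₂ = v₀, …, v_ℓ is a path of length ℓ with v₀ = a and v_ℓ = u_{ℓ−1}, and v_i ≠ u_j for all i ∈ [ℓ−1], j ∈ [ℓ]; P₁ is a path from x to v₁ and P_i is a path from u_{i−1} to v_i for i ∈ {2, …, ℓ−1}; and the paths P₁, …, P_{ℓ−1} are pairwise vertex-disjoint and disjoint from {a, u_{ℓ−1}, y}. Then the subgraph H with vertex set {a, u_{ℓ−1}, y} ∪ ⋃_{i=1}^{ℓ−1} V(P_i) and edge set E(Q₁) ∪ E(Q₂) ∪ ⋃_{i=1}^{ℓ−1} E(P_i) is an (x, a, y)-absorber: it contains an x–y path with vertex set V(H) and an x–y path with vertex set V(H) ∖ {a}. 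-/
/-!
Both paths are glued together from rungs `P i`, reversed rungs and single edges of `Q₁` and `Q₂`.
Consecutive pieces are joined by an edge, not at a shared vertex, so the support of the result is
the concatenation of the supports of the pieces, and it is a path as soon as the pieces are paths
with pairwise disjoint vertex sets.

For `1 ≤ i ≤ ℓ` there is a path from the start of `P i` to `y` with vertex set
`V(P i) ∪ ⋯ ∪ V(P (ℓ-1)) ∪ {u (ℓ-1), y}`: follow `P i`, the edge `v i v (i+1)`, `P (i+1)`
backwards and the edge `u i u (i+1)`, and continue from the start `u (i+1)` of `P (i+2)`; the
recursion ends with `u (ℓ-1) y` or with `P (ℓ-1), v (ℓ-1) u (ℓ-1), u (ℓ-1) y`. For `i = 1` this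
is the path avoiding `a`; the Hamilton path is `P 1, v 1 a u 1` followed by the path for `i = 2`.
-/

theorem Nat.exists_mem_Icc_iff_of_le {p : ℕ → Prop} {i n : ℕ} (hi : i ≤ n) :
    (∃ k ∈ Set.Icc i n, p k) ↔ p i ∨ ∃ k ∈ Set.Icc (i + 1) n, p k := by
  rw [← Set.insert_Icc_add_one_left_eq_Icc hi, Set.exists_mem_insert]

namespace SimpleGraph.Walk

variable {V : Type*} {G : SimpleGraph V} {u v v' w : V}

theorem support_append_cons (p : G.Walk u v) (h : G.Adj v v') (q : G.Walk v' w) :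
    (p.append (cons h q)).support = p.support ++ q.support := by
  simp [support_append]

theorem edges_append_cons (p : G.Walk u v) (h : G.Adj v v') (q : G.Walk v' w) :
    (p.append (cons h q)).edges = p.edges ++ s(v, v') :: q.edges := by
  simp [edges_append]

theorem isPath_append_cons_iff (p : G.Walk u v) (h : G.Adj v v') (q : G.Walk v' w) :
    (p.append (cons h q)).IsPath ↔ p.IsPath ∧ q.IsPath ∧ p.support.Disjoint q.support := by
  simp only [isPath_def, support_append_cons, List.nodup_append']

theorem mk_mem_edges_getVert (p : G.Walk u v) {i : ℕ} (hi : i < p.length) :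
    s(p.getVert i, p.getVert (i + 1)) ∈ p.edges :=
  p.mk_mem_edges_iff_exists.2 ⟨i, hi, rfl⟩

theorem mk_getVert_length_sub_one_mem_edges (p : G.Walk u v) (hp : 0 < p.length) :
    s(p.getVert (p.length - 1), v) ∈ p.edges := by
  have := p.mk_mem_edges_getVert (Nat.sub_lt hp one_pos)
  rwa [Nat.sub_add_cancel (m := 1) hp, getVert_length] at this

end SimpleGraph.Walk

namespace SimpleGraph

open Walk

/-- The absorber configuration with `n = ℓ - 1`: `u` and `v` run along `Q₁` and `Q₂`, the rung
`P i` starts at `s i`, which is `u (i - 1)` except for the free start `s 1 = x`, and `E` is the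
edge set of `H`. -/
structure IsLadder {V : Type*} (G : SimpleGraph V) (E : Set (Sym2 V)) (u v s : ℕ → V) (y : V)
    (n : ℕ) (P : ∀ i, G.Walk (s i) (v i)) : Prop where
  subset_edgeSet : E ⊆ G.edgeSet
  one_le : 1 ≤ n
  mem_u : ∀ i < n, s(u i, u (i + 1)) ∈ E
  mem_v : ∀ i < n, s(v i, v (i + 1)) ∈ E
  mem_vu : s(v n, u n) ∈ E
  mem_uy : s(u n, y) ∈ E
  start_succ : ∀ i, 1 ≤ i → s (i + 1) = u i
  rung_edges : ∀ i, 1 ≤ i → i ≤ n → ∀ e ∈ (P i).edges, e ∈ E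
  rung_isPath : ∀ i, 1 ≤ i → i ≤ n → (P i).IsPath
  rung_disjoint : ∀ i j, 1 ≤ i → i ≤ n → 1 ≤ j → j ≤ n → i ≠ j →
    ∀ w ∈ (P i).support, w ∉ (P j).support
  rung_avoid : ∀ i, 1 ≤ i → i ≤ n → ∀ w ∈ (P i).support, w ≠ u n ∧ w ≠ y

namespace IsLadder

variable {V : Type*} {G : SimpleGraph V} {E : Set (Sym2 V)} {u v s : ℕ → V} {y : V} {n : ℕ}
  {P : ∀ i, G.Walk (s i) (v i)}

theorem adj (hL : IsLadder G E u v s y n P) {b c : V} (h : s(b, c) ∈ E) : G.Adj b c :=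
  hL.subset_edgeSet h

theorem notMem_of_lt (hL : IsLadder G E u v s y n P) {i k : ℕ} (hk : 1 ≤ k) (hkn : k ≤ n)
    (hki : k < i) {w : V} (hw : w ∈ (P k).support) :
    ¬(w = u n ∨ w = y ∨ ∃ j ∈ Set.Icc i n, w ∈ (P j).support) := by
  rintro (rfl | rfl | ⟨j, ⟨hij, hjn⟩, hwj⟩)
  · exact (hL.rung_avoid k hk hkn _ hw).1 rfl
  · exact (hL.rung_avoid k hk hkn _ hw).2 rfl
  · exact hL.rung_disjoint k j hk hkn (by omega) hjn (by omega) w hw hwj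

theorem exists_isPath_from_last (hL : IsLadder G E u v s y n P) :
    ∃ Z : G.Walk (s n) y, Z.IsPath ∧ (∀ w, w ∈ Z.support ↔ w = u n ∨ w = y ∨ w ∈ (P n).support) ∧
      ∀ e ∈ Z.edges, e ∈ E := by
  have huy := hL.adj hL.mem_uy
  refine ⟨(P n).append (cons (hL.adj hL.mem_vu) huy.toWalk), ?_, fun w => ?_, ?_⟩
  · rw [isPath_append_cons_iff]
    refine ⟨hL.rung_isPath n hL.one_le le_rfl, huy.isPath_toWalk, fun w hw hw' => ?_⟩
    have := hL.rung_avoid n hL.one_le le_rfl w hw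
    simp_all
  · simp [support_append_cons, Adj.toWalk]
    tauto
  · simp only [edges_append_cons, Adj.toWalk, edges_cons, edges_nil, List.mem_append,
      List.mem_cons, List.not_mem_nil, or_false]
    rintro e (he | rfl | rfl)
    exacts [hL.rung_edges n hL.one_le le_rfl e he, hL.mem_vu, hL.mem_uy]

theorem exists_isPath_from (hL : IsLadder G E u v s y n P) (i : ℕ) (hi : 1 ≤ i)
    (hin : i ≤ n + 1) :
    ∃ Z : G.Walk (s i) y, Z.IsPath ∧
      (∀ w, w ∈ Z.support ↔ w = u n ∨ w = y ∨ ∃ k ∈ Set.Icc i n, w ∈ (P k).support) ∧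
      ∀ e ∈ Z.edges, e ∈ E := by
  obtain rfl | rfl | hin : i = n + 1 ∨ n = i ∨ i + 1 ≤ n := by omega
  · refine ⟨(hL.adj hL.mem_uy).toWalk.copy (hL.start_succ n hL.one_le).symm rfl,
      by simpa using (hL.adj hL.mem_uy).ne, fun w => ?_, by simpa using hL.mem_uy⟩
    simp [Adj.toWalk]
  · simpa using hL.exists_isPath_from_last
  obtain ⟨Z, hZ, hZsupp, hZE⟩ := hL.exists_isPath_from (i + 2) (by omega) (by omega)
  refine ⟨(P i).append (cons (hL.adj (hL.mem_v i (by omega)))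
    (((P (i + 1)).reverse.copy rfl (hL.start_succ i hi)).append
      (cons (hL.adj (hL.mem_u i (by omega))) (Z.copy (hL.start_succ (i + 1) (by omega)) rfl)))),
    ?_, fun w => ?_, ?_⟩
  · simp only [isPath_append_cons_iff, isPath_copy, isPath_reverse_iff, support_append_cons,
      support_copy, support_reverse]
    refine ⟨hL.rung_isPath i hi (by omega), ⟨hL.rung_isPath (i + 1) (by omega) hin, hZ,
      fun w hw hw' => ?_⟩, fun w hw hw' => ?_⟩
    · exact hL.notMem_of_lt (by omega) hin (by omega) (List.mem_reverse.1 hw) ((hZsupp w).1 hw')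
    · rcases List.mem_append.1 hw' with h | h
      · exact hL.rung_disjoint i (i + 1) hi (by omega) (by omega) hin (by omega) w hw
          (List.mem_reverse.1 h)
      · exact hL.notMem_of_lt hi (by omega) (by omega) hw ((hZsupp w).1 h)
  · simp only [support_append_cons, support_copy, support_reverse, List.mem_append,
      List.mem_reverse, hZsupp, Nat.exists_mem_Icc_iff_of_le (by omega : i ≤ n),
      Nat.exists_mem_Icc_iff_of_le hin]
    tauto
  · simp only [edges_append_cons, edges_copy, edges_reverse, List.mem_append, List.mem_cons,
      List.mem_reverse]
    rintro e (he | rfl | he | rfl | he)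
    exacts [hL.rung_edges i hi (by omega) e he, hL.mem_v i (by omega),
      hL.rung_edges (i + 1) (by omega) hin e he, hL.mem_u i (by omega), hZE e he]
termination_by n + 1 - i

theorem exists_isPath_through_base (hL : IsLadder G E u v s y n P) {a : V} (hu₀ : u 0 = a)
    (hv₀ : v 0 = a) (han : a ≠ u n) (hay : a ≠ y) (haP : ∀ k ∈ Set.Icc 1 n, a ∉ (P k).support) :
    ∃ W : G.Walk (s 1) y, W.IsPath ∧
      {w | w ∈ W.support} = {a, u n, y} ∪ ⋃ k ∈ Set.Icc 1 n, {w | w ∈ (P k).support} ∧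
      ∀ e ∈ W.edges, e ∈ E := by
  have hn := hL.one_le
  obtain ⟨Z, hZ, hZsupp, hZE⟩ := hL.exists_isPath_from 2 (by omega) (by omega)
  have hva : s(v 1, a) ∈ E := by simpa [hv₀, Sym2.eq_swap] using hL.mem_v 0 hn
  have hau : s(a, u 1) ∈ E := hu₀ ▸ hL.mem_u 0 hn
  refine ⟨(P 1).append (cons (hL.adj hva)
    (cons (hL.adj hau) (Z.copy (hL.start_succ 1 le_rfl) rfl))), ?_, ?_, ?_⟩
  · rw [isPath_append_cons_iff, cons_isPath_iff, isPath_copy, support_cons, support_copy]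
    refine ⟨hL.rung_isPath 1 le_rfl hn, ⟨hZ, ?_⟩, fun w hw hw' => ?_⟩
    · rw [hZsupp]
      rintro (h | h | ⟨k, ⟨hk, hkn⟩, hak⟩)
      exacts [han h, hay h, haP k ⟨by omega, hkn⟩ hak]
    · rcases List.mem_cons.1 hw' with rfl | h
      · exact haP 1 ⟨le_rfl, hn⟩ hw
      · exact hL.notMem_of_lt le_rfl hn one_lt_two hw ((hZsupp w).1 h)
  · ext w
    simp only [Set.mem_ofPred_eq, support_append_cons, support_cons, support_copy,
      List.mem_append, List.mem_cons, hZsupp, Set.mem_union, Set.mem_insert_iff,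
      Set.mem_singleton_iff, Set.mem_iUnion, exists_prop, Nat.exists_mem_Icc_iff_of_le hn]
    tauto
  · simp only [edges_append_cons, edges_cons, edges_copy, List.mem_append, List.mem_cons]
    rintro e (he | rfl | rfl | he)
    exacts [hL.rung_edges 1 le_rfl hn e he, hva, hau, hZE e he]

theorem exists_isPath_avoiding_base (hL : IsLadder G E u v s y n P) {a : V} (han : a ≠ u n)
    (hay : a ≠ y) (haP : ∀ k ∈ Set.Icc 1 n, a ∉ (P k).support) :
    ∃ W : G.Walk (s 1) y, W.IsPath ∧
      {w | w ∈ W.support} = ({a, u n, y} ∪ ⋃ k ∈ Set.Icc 1 n, {w | w ∈ (P k).support}) \ {a} ∧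
      ∀ e ∈ W.edges, e ∈ E := by
  obtain ⟨Z, hZ, hZsupp, hZE⟩ := hL.exists_isPath_from 1 le_rfl (by omega)
  refine ⟨Z, hZ, ?_, hZE⟩
  rw [Set.insert_union, Set.insert_sdiff_self_of_notMem]
  · ext w
    simp [hZsupp, or_assoc]
  · simp only [Set.mem_union, Set.mem_insert_iff, Set.mem_singleton_iff, Set.mem_iUnion,
      exists_prop]
    rintro ((h | h) | ⟨k, hk, hak⟩)
    exacts [han h, hay h, haP k hk hak]

end IsLadder

end SimpleGraph

theorem statement15_general {V : Type*} (G : SimpleGraph V) (x a y : V)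
    (hay : a ≠ y)
    (ℓ : ℕ) (hℓ3 : 3 ≤ ℓ)
    (Q₁ : G.Walk a y) (hQ₁p : Q₁.IsPath) (hQ₁l : Q₁.length = ℓ)
    (Q₂ : G.Walk a (Q₁.getVert (ℓ - 1))) (hQ₂l : Q₂.length = ℓ)
    (P : ∀ i : ℕ, G.Walk (if i = 1 then x else Q₁.getVert (i - 1)) (Q₂.getVert i))
    (hPpath : ∀ i : ℕ, 1 ≤ i → i ≤ ℓ - 1 → (P i).IsPath)
    (hPdisj : ∀ i j : ℕ, 1 ≤ i → i ≤ ℓ - 1 → 1 ≤ j → j ≤ ℓ - 1 → i ≠ j →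
      ∀ v : V, v ∈ (P i).support → v ∉ (P j).support)
    (hPavoid : ∀ i : ℕ, 1 ≤ i → i ≤ ℓ - 1 → ∀ v ∈ (P i).support,
      v ≠ a ∧ v ≠ Q₁.getVert (ℓ - 1) ∧ v ≠ y) :
    (∃ Wk : G.Walk x y, Wk.IsPath ∧
        {v : V | v ∈ Wk.support} =
          ({a, Q₁.getVert (ℓ - 1), y} ∪
            ⋃ i ∈ Set.Icc 1 (ℓ - 1), {v : V | v ∈ (P i).support}) ∧
        ∀ e ∈ Wk.edges,
          e ∈ Q₁.edges ∨ e ∈ Q₂.edges ∨ ∃ i ∈ Set.Icc 1 (ℓ - 1), e ∈ (P i).edges) ∧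
    (∃ Wk : G.Walk x y, Wk.IsPath ∧
        {v : V | v ∈ Wk.support} =
          (({a, Q₁.getVert (ℓ - 1), y} ∪
            ⋃ i ∈ Set.Icc 1 (ℓ - 1), {v : V | v ∈ (P i).support}) \ {a}) ∧
        ∀ e ∈ Wk.edges,
          e ∈ Q₁.edges ∨ e ∈ Q₂.edges ∨ ∃ i ∈ Set.Icc 1 (ℓ - 1), e ∈ (P i).edges) := by
  have hL : SimpleGraph.IsLadder G
      {e | e ∈ Q₁.edges ∨ e ∈ Q₂.edges ∨ ∃ i ∈ Set.Icc 1 (ℓ - 1), e ∈ (P i).edges}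
      Q₁.getVert Q₂.getVert (fun i => if i = 1 then x else Q₁.getVert (i - 1)) y (ℓ - 1) P :=
    { subset_edgeSet := by
        rintro e (he | he | ⟨i, -, he⟩) <;> exact SimpleGraph.Walk.edges_subset_edgeSet _ he
      one_le := by omega
      mem_u := fun i hi => Or.inl (Q₁.mk_mem_edges_getVert (by omega))
      mem_v := fun i hi => Or.inr (Or.inl (Q₂.mk_mem_edges_getVert (by omega)))
      mem_vu := Or.inr (Or.inl (by
        simpa [hQ₂l] using Q₂.mk_getVert_length_sub_one_mem_edges (by omega)))
      mem_uy := Or.inl (by simpa [hQ₁l] using Q₁.mk_getVert_length_sub_one_mem_edges (by omega))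
      start_succ := fun i hi => by rw [if_neg (by omega), Nat.add_sub_cancel]
      rung_edges := fun i hi hiℓ e he => Or.inr (Or.inr ⟨i, ⟨hi, hiℓ⟩, he⟩)
      rung_isPath := hPpath
      rung_disjoint := hPdisj
      rung_avoid := fun i hi hiℓ w hw => (hPavoid i hi hiℓ w hw).2 }
  have han : a ≠ Q₁.getVert (ℓ - 1) := fun h => by
    have := (hQ₁p.getVert_eq_start_iff (i := ℓ - 1) (by omega)).1 h.symm
    omega
  have haP (k : ℕ) (hk : k ∈ Set.Icc 1 (ℓ - 1)) : a ∉ (P k).support := fun h =>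
    (hPavoid k hk.1 hk.2 a h).1 rfl
  exact ⟨hL.exists_isPath_through_base Q₁.getVert_zero Q₂.getVert_zero han hay haP,
    hL.exists_isPath_avoiding_base han hay haP⟩

/-- the construction of an `(x, a, y)`-absorber. Given distinct vertices
`x, a, y`, an odd `ℓ ≥ 3`, paths `Q₁ : a → y` and `Q₂ : a → u_{ℓ−1}` of length `ℓ`
(internally disjoint as specified), and pairwise vertex-disjoint paths
`P₁ : x → v₁`, `P_i : u_{i−1} → v_i` (`2 ≤ i ≤ ℓ−1`) avoiding `{a, u_{ℓ−1}, y}`,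
the subgraph `H` with vertex set `{a, u_{ℓ−1}, y} ∪ ⋃ V(P_i)` and edge set
`E(Q₁) ∪ E(Q₂) ∪ ⋃ E(P_i)` contains an `x`–`y` path with vertex set `V(H)` and an
`x`–`y` path with vertex set `V(H) ∖ {a}`. -/
theorem statement15 {V : Type*} (G : SimpleGraph V) (x a y : V)
    (hxa : x ≠ a) (hxy : x ≠ y) (hay : a ≠ y)
    (ℓ : ℕ) (hℓ3 : 3 ≤ ℓ) (hodd : Odd ℓ)
    (Q₁ : G.Walk a y) (hQ₁p : Q₁.IsPath) (hQ₁l : Q₁.length = ℓ)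
    (Q₂ : G.Walk a (Q₁.getVert (ℓ - 1))) (hQ₂p : Q₂.IsPath) (hQ₂l : Q₂.length = ℓ)
    (hQdisj : ∀ i j : ℕ, 1 ≤ i → i ≤ ℓ - 1 → 1 ≤ j → j ≤ ℓ →
      Q₂.getVert i ≠ Q₁.getVert j)
    (P : ∀ i : ℕ, G.Walk (if i = 1 then x else Q₁.getVert (i - 1)) (Q₂.getVert i))
    (hPpath : ∀ i : ℕ, 1 ≤ i → i ≤ ℓ - 1 → (P i).IsPath)
    (hPdisj : ∀ i j : ℕ, 1 ≤ i → i ≤ ℓ - 1 → 1 ≤ j → j ≤ ℓ - 1 → i ≠ j →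
      ∀ v : V, v ∈ (P i).support → v ∉ (P j).support)
    (hPavoid : ∀ i : ℕ, 1 ≤ i → i ≤ ℓ - 1 → ∀ v ∈ (P i).support,
      v ≠ a ∧ v ≠ Q₁.getVert (ℓ - 1) ∧ v ≠ y) :
    (∃ Wk : G.Walk x y, Wk.IsPath ∧
        {v : V | v ∈ Wk.support} =
          ({a, Q₁.getVert (ℓ - 1), y} ∪
            ⋃ i ∈ Set.Icc 1 (ℓ - 1), {v : V | v ∈ (P i).support}) ∧
        ∀ e ∈ Wk.edges,
          e ∈ Q₁.edges ∨ e ∈ Q₂.edges ∨ ∃ i ∈ Set.Icc 1 (ℓ - 1), e ∈ (P i).edges) ∧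
    (∃ Wk : G.Walk x y, Wk.IsPath ∧
        {v : V | v ∈ Wk.support} =
          (({a, Q₁.getVert (ℓ - 1), y} ∪
            ⋃ i ∈ Set.Icc 1 (ℓ - 1), {v : V | v ∈ (P i).support}) \ {a}) ∧
        ∀ e ∈ Wk.edges,
          e ∈ Q₁.edges ∨ e ∈ Q₂.edges ∨ ∃ i ∈ Set.Icc 1 (ℓ - 1), e ∈ (P i).edges) :=
  statement15_general G x a y hay ℓ hℓ3 Q₁ hQ₁p hQ₁l Q₂ hQ₂l P hPpath hPdisj hPavoid
end

section
/- Let G be a (d±d')-nearly regular n-vertex graph with d' ≤ d/100 in which, for any vertex w and any t, the simple random walk of length t ≥ t₀ from any vertex hits w at time t with probability in [d(w)/(2e(G)) − n^{-10}, d(w)/(2e(G)) + n^{-10}] (i.e., G is mixing in time t₀). Let ℓ ≥ 2t₀, and let a, b be vertices. Then for any t with 1 ≤ t ≤ ℓ/2 and any vertex v, the probability that the random walk of length ℓ from a, conditioned to end at b, is at v at time t is at most 2/(d − d') + n^{-6} ≤ 3/d. -/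
noncomputable section

/-- The probability that the simple random walk (moving to a uniformly random neighbour
at each step) started at `a` follows exactly the walk `w`. -/
def walkProb {V : Type*} [Fintype V] (G : SimpleGraph V) [DecidableRel G.Adj] :
    ∀ {a b : V}, G.Walk a b → ℝ
  | _, _, SimpleGraph.Walk.nil => 1
  | a, _, SimpleGraph.Walk.cons _ p => ((G.degree a : ℝ))⁻¹ * walkProb G p

/-!
Chapman–Kolmogorov turns the conditioned probability into
`P^t(a,v) P^{ℓ-t}(v,b) / ∑ₓ P^t(a,x) P^{ℓ-t}(x,b)`. As `ℓ - t ≥ t₀`, mixing puts every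
`P^{ℓ-t}(x,b)` within `ε = n⁻¹⁰` of `π = d(b)/2e(G) ≥ 3ε`, so the denominator is at least `π - ε`
while the second factor of the numerator is at most `π + ε ≤ 2(π - ε)`. The first factor is at
most `1/δ(G)`, since the last of its `t ≥ 1` steps lands on `v` with probability at most `1/δ(G)`.
-/

open Finset

namespace SimpleGraph

variable {V : Type*} [Fintype V] (G : SimpleGraph V) [DecidableRel G.Adj]

lemma walkProb_nonneg : ∀ {u v : V} (p : G.Walk u v), 0 ≤ walkProb G p
  | _, _, .nil => zero_le_one
  | _, _, .cons _ p => mul_nonneg (inv_nonneg.2 (Nat.cast_nonneg _)) (walkProb_nonneg p)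

variable [DecidableEq V]

lemma sum_finsetWalkLength_succ {M : Type*} [AddCommMonoid M] {n : ℕ} {u v : V}
    (f : G.Walk u v → M) :
    ∑ p ∈ G.finsetWalkLength (n + 1) u v, f p
      = ∑ w : G.neighborSet u,
          ∑ p ∈ G.finsetWalkLength n w v, f (.cons ((G.mem_neighborSet u w).1 w.2) p) := by
  rw [finsetWalkLength, sum_biUnion]
  · simp only [sum_map]
    rfl
  · rintro x - y - hxy
    simp only [Function.onFun]
    refine Finset.disjoint_left.2 fun p hx hy => ?_
    obtain ⟨q, -, rfl⟩ := mem_map.1 hx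
    obtain ⟨r, -, h⟩ := mem_map.1 hy
    exact hxy (Subtype.ext (Walk.cons.inj h).1.symm)

def transitionProb (n : ℕ) (u v : V) : ℝ :=
  ∑ p ∈ G.finsetWalkLength n u v, walkProb G p

lemma transitionProb_nonneg (n : ℕ) (u v : V) : 0 ≤ G.transitionProb n u v :=
  sum_nonneg fun p _ => G.walkProb_nonneg p

lemma transitionProb_zero (u v : V) : G.transitionProb 0 u v = if u = v then 1 else 0 := by
  unfold transitionProb finsetWalkLength
  split_ifs with h
  · subst h
    simp [walkProb]
  · simp

lemma transitionProb_succ (n : ℕ) (u v : V) :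
    G.transitionProb (n + 1) u v
      = (G.degree u : ℝ)⁻¹ * ∑ w ∈ G.neighborFinset u, G.transitionProb n w v := by
  rw [neighborFinset_def, ← sum_set_coe, mul_sum, transitionProb, sum_finsetWalkLength_succ]
  refine sum_congr rfl fun w _ => ?_
  rw [transitionProb, mul_sum]
  rfl

lemma sum_transitionProb (hdeg : ∀ x, 0 < G.degree x) (n : ℕ) (u : V) :
    ∑ v, G.transitionProb n u v = 1 := by
  induction n generalizing u with
  | zero => simp [transitionProb_zero]
  | succ n ih =>
    simp only [transitionProb_succ, ← mul_sum]
    rw [sum_comm, sum_congr rfl fun w _ => ih w, sum_const, card_neighborFinset_eq_degree,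
      nsmul_one, inv_mul_cancel₀ (by exact_mod_cast (hdeg u).ne')]

lemma sum_filter_getVert_eq {t n : ℕ} (htn : t ≤ n) (u v w : V) :
    ∑ p ∈ (G.finsetWalkLength n u w).filter (fun p => p.getVert t = v), walkProb G p
      = G.transitionProb t u v * G.transitionProb (n - t) v w := by
  induction t generalizing n u with
  | zero =>
    simp only [Walk.getVert_zero, transitionProb_zero, Nat.sub_zero]
    split_ifs with h
    · subst h
      simp [transitionProb]
    · simp [h]
  | succ t ih =>
    obtain ⟨n, rfl⟩ : ∃ m, n = m + 1 := ⟨n - 1, by omega⟩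
    rw [sum_filter, sum_finsetWalkLength_succ, transitionProb_succ, mul_assoc, sum_mul,
      neighborFinset_def, ← sum_set_coe, mul_sum]
    refine sum_congr rfl fun x _ => ?_
    rw [Nat.add_sub_add_right, ← ih (by omega), sum_filter, mul_sum]
    refine sum_congr rfl fun p _ => ?_
    rw [Walk.getVert_cons_succ]
    split_ifs <;> simp [walkProb]

lemma transitionProb_eq_sum_mul {t n : ℕ} (htn : t ≤ n) (u w : V) :
    G.transitionProb n u w = ∑ x, G.transitionProb t u x * G.transitionProb (n - t) x w := by
  simp only [← G.sum_filter_getVert_eq htn]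
  exact (sum_fiberwise _ _ _).symm

lemma transitionProb_one_le (u v : V) : G.transitionProb 1 u v ≤ (G.degree u : ℝ)⁻¹ := by
  rw [transitionProb_succ]
  simp only [transitionProb_zero, sum_ite_eq']
  split_ifs <;> simp

lemma transitionProb_succ_le {δ : ℝ} (hδ : 0 < δ) (hdeg : ∀ x, δ ≤ G.degree x) (s : ℕ)
    (u v : V) : G.transitionProb (s + 1) u v ≤ δ⁻¹ :=
  calc G.transitionProb (s + 1) u v
      = ∑ x, G.transitionProb s u x * G.transitionProb 1 x v := by
        rw [G.transitionProb_eq_sum_mul (s.le_add_right 1), Nat.add_sub_cancel_left]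
    _ ≤ ∑ x, G.transitionProb s u x * δ⁻¹ := by
        gcongr with x
        · exact G.transitionProb_nonneg _ _ _
        · exact (G.transitionProb_one_le x v).trans (inv_anti₀ hδ (hdeg x))
    _ = δ⁻¹ := by
        rw [← sum_mul, G.sum_transitionProb (fun x => by exact_mod_cast hδ.trans_le (hdeg x)),
          one_mul]

lemma transitionProb_succ_of_degree_eq_zero {u : V} (hu : G.degree u = 0) (s : ℕ) (v : V) :
    G.transitionProb (s + 1) u v = 0 := by
  simp [transitionProb_succ, hu]

lemma transitionProb_mul_div_le_of_mixing {δ π ε : ℝ} (hδ : 0 < δ)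
    (hdeg : ∀ x, δ ≤ G.degree x) {m : ℕ} {b : V} (hmix : ∀ x, |G.transitionProb m x b - π| ≤ ε)
    (hε : 3 * ε ≤ π) (s : ℕ) (a v : V) :
    G.transitionProb (s + 1) a v * G.transitionProb m v b
        / ∑ x, G.transitionProb (s + 1) a x * G.transitionProb m x b ≤ 2 / δ := by
  have hε0 : 0 ≤ ε := (abs_nonneg _).trans (hmix b)
  have hden : π - ε ≤ ∑ x, G.transitionProb (s + 1) a x * G.transitionProb m x b :=
    calc π - ε = ∑ x, G.transitionProb (s + 1) a x * (π - ε) := by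
          rw [← sum_mul, G.sum_transitionProb (fun x => by exact_mod_cast hδ.trans_le (hdeg x)),
            one_mul]
      _ ≤ _ := by
          gcongr with x
          · exact G.transitionProb_nonneg _ _ _
          · linarith [(abs_le.1 (hmix x)).1]
  have hnum : G.transitionProb (s + 1) a v * G.transitionProb m v b ≤ δ⁻¹ * (π + ε) :=
    mul_le_mul (G.transitionProb_succ_le hδ hdeg s a v) (by linarith [(abs_le.1 (hmix v)).2])
      (G.transitionProb_nonneg _ _ _) (inv_nonneg.2 hδ.le)
  refine div_le_of_le_mul₀ (by linarith) (by positivity) ?_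
  calc _ ≤ δ⁻¹ * (π + ε) := hnum
    _ ≤ δ⁻¹ * (2 * (π - ε)) := by gcongr; linarith
    _ = 2 / δ * (π - ε) := by ring
    _ ≤ 2 / δ * ∑ x, G.transitionProb (s + 1) a x * G.transitionProb m x b :=
        mul_le_mul_of_nonneg_left hden (div_pos two_pos hδ).le

omit [DecidableEq V] in
lemma div_card_mul_le_degree_div {δ Δ : ℝ} (hδ : 0 < δ)
    (hdeg : ∀ x, δ ≤ G.degree x ∧ G.degree x ≤ Δ) (b : V) :
    δ / (Fintype.card V * Δ) ≤ G.degree b / (2 * #G.edgeFinset) := by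
  have hsum : ∑ x, (G.degree x : ℝ) = 2 * #G.edgeFinset := by
    exact_mod_cast G.sum_degrees_eq_twice_card_edges
  have hpos : 0 < ∑ x, (G.degree x : ℝ) :=
    (hδ.trans_le (hdeg b).1).trans_le
      (single_le_sum (f := fun x => (G.degree x : ℝ)) (fun _ _ => Nat.cast_nonneg _) (mem_univ b))
  have hle : ∑ x, (G.degree x : ℝ) ≤ Fintype.card V * Δ := by
    simpa using sum_le_sum fun x (_ : x ∈ univ) => (hdeg x).2
  rw [← hsum]
  exact div_le_div₀ (Nat.cast_nonneg _) (hdeg b).1 hpos hle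

end SimpleGraph

lemma three_mul_inv_pow_ten_le {N d d' : ℝ} (hN : 2 ≤ N) (hd : 0 < d) (hd' : 0 ≤ d')
    (hdd' : d' ≤ d / 100) : 3 * (N ^ 10)⁻¹ ≤ (d - d') / (N * (d + d')) := by
  have hN9 : 6 ≤ N ^ 9 := le_trans (by norm_num) (pow_le_pow_left₀ (by norm_num) hN 9)
  calc 3 * (N ^ 10)⁻¹ = 3 / (N * N ^ 9) := by ring
    _ ≤ 3 / (N * 6) := by gcongr
    _ ≤ (d - d') / (N * (d + d')) := by
        rw [div_le_div_iff₀ (by positivity) (by positivity)]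
        nlinarith

/-- Let `G` be a `(d ± d')`-nearly-regular `n`-vertex graph with
`d' ≤ d/100` that is mixing in time `t₀`: for all vertices `u, w` and all `t ≥ t₀`, the
random walk of length `t` from `u` ends at `w` with probability within `n⁻¹⁰` of
`d(w)/(2e(G))`. Let `ℓ ≥ 2t₀`. Then for any `1 ≤ t ≤ ℓ/2` and any vertex `v`, the
random walk of length `ℓ` from `a` conditioned to end at `b` is at `v` at time `t` with
probability at most `2/(d − d') + n⁻⁶`, which is at most `3/d`. -/
theorem statement16 {V : Type*} [Fintype V] [DecidableEq V]
    (G : SimpleGraph V) [DecidableRel G.Adj]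
    (d d' : ℝ) (hd' : d' ≤ d / 100)
    (hreg : ∀ v : V, d - d' ≤ (G.degree v : ℝ) ∧ (G.degree v : ℝ) ≤ d + d')
    (t₀ ℓ : ℕ) (hℓ : 2 * t₀ ≤ ℓ)
    (hmix : ∀ (u w : V) (t : ℕ), t₀ ≤ t →
      |(∑ p ∈ G.finsetWalkLength t u w, walkProb G p)
          - (G.degree w : ℝ) / (2 * (G.edgeFinset.card : ℝ))|
        ≤ ((Fintype.card V : ℝ) ^ 10)⁻¹)
    (a b : V) (t : ℕ) (ht1 : 1 ≤ t) (ht2 : 2 * t ≤ ℓ) (v : V) :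
    (∑ p ∈ (G.finsetWalkLength ℓ a b).filter (fun p => p.getVert t = v), walkProb G p) /
        (∑ p ∈ G.finsetWalkLength ℓ a b, walkProb G p)
      ≤ 2 / (d - d') + ((Fintype.card V : ℝ) ^ 6)⁻¹ ∧
    (∑ p ∈ (G.finsetWalkLength ℓ a b).filter (fun p => p.getVert t = v), walkProb G p) /
        (∑ p ∈ G.finsetWalkLength ℓ a b, walkProb G p)
      ≤ 3 / d := by
  have hd'0 : 0 ≤ d' := by linarith [(hreg a).1, (hreg a).2]
  obtain ⟨s, rfl⟩ : ∃ s, t = s + 1 := ⟨t - 1, by omega⟩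
  rw [G.sum_filter_getVert_eq (by omega), ← SimpleGraph.transitionProb,
    G.transitionProb_eq_sum_mul (t := s + 1) (by omega) a b]
  rcases (show 0 ≤ d by linarith).eq_or_lt with rfl | hd
  -- `d = 0` forces an edgeless graph, where the walk cannot leave `a` and the ratio is `0`
  · obtain rfl : d' = 0 := by linarith
    have ha : G.degree a = 0 := by simpa using (hreg a).2
    simp [G.transitionProb_succ_of_degree_eq_zero ha]
  have hδ : 0 < d - d' := by linarith
  have hN : (2 : ℝ) ≤ Fintype.card V := by
    obtain ⟨w, hw⟩ := (G.degree_pos_iff_exists_adj a).1 (by exact_mod_cast hδ.trans_le (hreg a).1)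
    exact_mod_cast Fintype.one_lt_card_iff.2 ⟨a, w, hw.ne⟩
  have hπ := (three_mul_inv_pow_ten_le hN hd hd'0 hd').trans
    (G.div_card_mul_le_degree_div hδ hreg b)
  have hcond := G.transitionProb_mul_div_le_of_mixing hδ (fun x => (hreg x).1)
    (fun x => hmix x b (ℓ - (s + 1)) (by omega)) hπ s a v
  refine ⟨hcond.trans (le_add_of_nonneg_right (by positivity)), hcond.trans ?_⟩
  rw [div_le_div_iff₀ hδ hd]
  linarith
end
end
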